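/- arXiv:1901.10166 — 6 statements merged into one kernel-verified Lean document; each statement's English description precedes it below -/
import Mathlib

section
/- Let a, b, r > 0 and let λ : [0,∞) → [0,∞) be continuous with λ(z) ≥ a·f(z)^b/m(f(z)) for all z ≥ r. Then for every x ≥ f⁻¹(r) and every y ≥ f(x), one has ∫_{f(x)}^{y} λ(f⁻¹(u)) g_x(u) du ≥ (a/(b+1))·(y^{b+1} − f(x)^{b+1}); consequently, the transition survival function satisfies exp(−∫_{f(x)}^{y} λ(f⁻¹(u)) g_x(u) du) ≤ exp(−(a/(b+1))·(y^{b+1} − f(x)^{b+1})). -/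
open MeasureTheory

/-- if λ(z) ≥ a·f(z)^b/m(f(z)) for z ≥ r, then for x ≥ f⁻¹(r) and y ≥ f(x),
∫_{f(x)}^{y} λ(f⁻¹(u)) g_x(u) du ≥ (a/(b+1))·(y^{b+1} − f(x)^{b+1}), and consequently
exp(−∫_{f(x)}^{y} λ(f⁻¹(u)) g_x(u) du) ≤ exp(−(a/(b+1))·(y^{b+1} − f(x)^{b+1})). -/
theorem jump_rate_tail_bound
    (κ : ℝ) (hκ : κ ∈ Set.Ioo (0 : ℝ) 1)
    (f finv : ℝ → ℝ)
    (hf_mono : StrictMono f) (hf_cont : Continuous f) (hf0 : f 0 = 0)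
    (hf_bound : ∀ x : ℝ, 0 < x → 0 < f x ∧ f x ≤ κ * x)
    (hfinv_left : Function.LeftInverse finv f)
    (hfinv_right : Function.RightInverse finv f)
    (g : ℝ → ℝ → ℝ) (m : ℝ → ℝ)
    (hm_cont : Continuous m) (hm_pos : ∀ y : ℝ, 0 < m y)
    (hg_lower : ∀ x y : ℝ, 0 ≤ x → 0 < y → m y ≤ g x y)
    (a b r : ℝ) (ha : 0 < a) (hb : 0 < b) (hr : 0 < r)
    (lam : ℝ → ℝ) (hlam_cont : Continuous lam) (hlam_nonneg : ∀ x, 0 ≤ lam x)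
    (hlam_lb : ∀ z : ℝ, r ≤ z → a * f z ^ b / m (f z) ≤ lam z)
    (x y : ℝ) (hx : finv r ≤ x) (hy : f x ≤ y)
    (hint : IntervalIntegrable (fun u => lam (finv u) * g x u) volume (f x) y) :
    (a / (b + 1)) * (y ^ (b + 1) - f x ^ (b + 1))
        ≤ (∫ u in (f x)..y, lam (finv u) * g x u) ∧
      Real.exp (-(∫ u in (f x)..y, lam (finv u) * g x u))
        ≤ Real.exp (-(a / (b + 1)) * (y ^ (b + 1) - f x ^ (b + 1))) := by
  obtain ⟨hκ0, hκ1⟩ := hκ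
  -- finv r > 0
  have hfinvr_pos : 0 < finv r := by
    by_contra h
    push_neg at h
    have : f (finv r) ≤ f 0 := hf_mono.monotone h
    rw [hfinv_right r, hf0] at this
    linarith
  have hx_pos : 0 < x := lt_of_lt_of_le hfinvr_pos hx
  have hfx_r : r ≤ f x := by
    have := hf_mono.monotone hx
    rwa [hfinv_right r] at this
  have hfx_pos : 0 < f x := lt_of_lt_of_le hr hfx_r
  -- pointwise lower bound on [f x, y]
  have hpt : ∀ u ∈ Set.Icc (f x) y, a * u ^ b ≤ lam (finv u) * g x u := by
    intro u hu
    have hu_r : r ≤ u := le_trans hfx_r hu.1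
    have hu_pos : 0 < u := lt_of_lt_of_le hr hu_r
    have hfinvu_pos : 0 < finv u := by
      by_contra h
      push_neg at h
      have : f (finv u) ≤ f 0 := hf_mono.monotone h
      rw [hfinv_right u, hf0] at this
      linarith
    have hfinvu_r : r ≤ finv u := by
      have hb2 := (hf_bound (finv u) hfinvu_pos).2
      rw [hfinv_right u] at hb2
      nlinarith
    have hlam : a * u ^ b / m u ≤ lam (finv u) := by
      have := hlam_lb (finv u) hfinvu_r
      rwa [hfinv_right u] at this
    have hg : m u ≤ g x u := hg_lower x u hx_pos.le hu_pos
    have hmu := hm_pos u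
    calc a * u ^ b = (a * u ^ b / m u) * m u := by field_simp
      _ ≤ lam (finv u) * g x u := by
          apply mul_le_mul hlam hg hmu.le (hlam_nonneg _)
  have hint2 : IntervalIntegrable (fun u => a * u ^ b) volume (f x) y := by
    apply ContinuousOn.intervalIntegrable
    apply ContinuousOn.mul continuousOn_const
    intro u hu
    rw [Set.uIcc_of_le hy] at hu
    exact (Real.continuousAt_rpow_const u b
      (Or.inl (lt_of_lt_of_le hfx_pos hu.1).ne')).continuousWithinAt
  have hmono : (∫ u in (f x)..y, a * u ^ b) ≤ ∫ u in (f x)..y, lam (finv u) * g x u :=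
    intervalIntegral.integral_mono_on hy hint2 hint hpt
  have hcalc : (∫ u in (f x)..y, a * u ^ b)
      = (a / (b + 1)) * (y ^ (b + 1) - f x ^ (b + 1)) := by
    rw [intervalIntegral.integral_const_mul, integral_rpow (Or.inl (by linarith))]
    ring
  have h1 : (a / (b + 1)) * (y ^ (b + 1) - f x ^ (b + 1))
      ≤ ∫ u in (f x)..y, lam (finv u) * g x u := by
    rw [← hcalc]; exact hmono
  refine ⟨h1, ?_⟩
  apply Real.exp_le_exp.mpr
  linarith
end

section
/- Let λ : [0,∞) → [0,∞) be continuous and let ν be an invariant probability density of the transition kernel with density P_λ, i.e. ν ≥ 0, ∫₀^∞ ν = 1 and ν(y) = ∫₀^∞ ν(x) P_λ(x,y) dx for every y > 0. Then for every y > 0, ν(f(y)) = λ(y) · D(y), where D(y) := ∫₀^{y} ν(x) · g_x(f(y)) · exp(−∫_{f(x)}^{f(y)} λ(f⁻¹(u)) g_x(u) du) dx, which equals E_ν[g_{Z₀}(f(y)) · 1{Z₀ ≤ y ≤ f⁻¹(Z₁)}] when Z₀ has density ν and Z₁ given Z₀ = x has density P_λ(x,·). -/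
open MeasureTheory

/-- Transition density of the embedded chain:
`P_λ(x,y) = λ(f⁻¹(y)) g_x(y) exp(−∫_{f(x)}^{y} λ(f⁻¹(u)) g_x(u) du)·1{y ≥ f(x)}`. -/
noncomputable def Pdens (f finv : ℝ → ℝ) (g : ℝ → ℝ → ℝ) (lam : ℝ → ℝ) (x y : ℝ) : ℝ :=
  if f x ≤ y then
    lam (finv y) * g x y * Real.exp (-(∫ u in (f x)..y, lam (finv u) * g x u))
  else 0

/-- if ν is an invariant probability density of the kernel with density
P_λ, then for every y > 0, ν(f(y)) = λ(y)·D(y) with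
D(y) = ∫₀^y ν(x) g_x(f(y)) exp(−∫_{f(x)}^{f(y)} λ(f⁻¹(u)) g_x(u) du) dx. -/
theorem invariant_density_jump_rate_formula
    (κ : ℝ) (hκ : κ ∈ Set.Ioo (0 : ℝ) 1)
    (f finv : ℝ → ℝ)
    (hf_mono : StrictMono f) (hf_cont : Continuous f) (hf0 : f 0 = 0)
    (hf_bound : ∀ x : ℝ, 0 < x → 0 < f x ∧ f x ≤ κ * x)
    (hfinv_left : Function.LeftInverse finv f)
    (hfinv_right : Function.RightInverse finv f)
    (g : ℝ → ℝ → ℝ) (hg_meas : Measurable (Function.uncurry g))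
    (lam : ℝ → ℝ) (hlam_cont : Continuous lam) (hlam_nonneg : ∀ x, 0 ≤ lam x)
    (ν : ℝ → ℝ) (hν_meas : Measurable ν) (hν_nonneg : ∀ x, 0 ≤ ν x)
    (hν_total : (∫ x in Set.Ioi (0 : ℝ), ν x) = 1)
    (hν_int : ∀ y : ℝ, 0 < y →
      IntegrableOn (fun x => ν x * Pdens f finv g lam x y) (Set.Ioi (0 : ℝ)))
    (hν_inv : ∀ y : ℝ, 0 < y →
      ν y = ∫ x in Set.Ioi (0 : ℝ), ν x * Pdens f finv g lam x y) :
    ∀ y : ℝ, 0 < y →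
      ν (f y) = lam y *
        ∫ x in (0 : ℝ)..y,
          ν x * g x (f y) * Real.exp (-(∫ u in (f x)..(f y), lam (finv u) * g x u)) := by
  intro y hy
  have hfy : 0 < f y := (hf_bound y hy).1
  have h1 := hν_inv (f y) hfy
  have hint := hν_int (f y) hfy
  have hset : Set.Ioi (0:ℝ) = Set.Ioc 0 y ∪ Set.Ioi y :=
    (Set.Ioc_union_Ioi_eq_Ioi hy.le).symm
  have hsplit : (∫ x in Set.Ioi (0:ℝ), ν x * Pdens f finv g lam x (f y))
      = (∫ x in Set.Ioc (0:ℝ) y, ν x * Pdens f finv g lam x (f y))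
        + ∫ x in Set.Ioi y, ν x * Pdens f finv g lam x (f y) := by
    rw [hset]
    exact setIntegral_union (Set.Ioc_disjoint_Ioi le_rfl) measurableSet_Ioi
      (hint.mono_set (by rw [hset]; exact Set.subset_union_left))
      (hint.mono_set (by rw [hset]; exact Set.subset_union_right))
  have hzero : (∫ x in Set.Ioi y, ν x * Pdens f finv g lam x (f y)) = 0 := by
    apply setIntegral_eq_zero_of_forall_eq_zero
    intro x hx
    have : ¬ f x ≤ f y := by
      simpa [hf_mono.le_iff_le] using not_le.2 (Set.mem_Ioi.mp hx)
    simp [Pdens, this]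
  have hcongr : (∫ x in Set.Ioc (0:ℝ) y, ν x * Pdens f finv g lam x (f y))
      = ∫ x in Set.Ioc (0:ℝ) y,
          lam y * (ν x * g x (f y)
            * Real.exp (-(∫ u in (f x)..(f y), lam (finv u) * g x u))) := by
    apply setIntegral_congr_fun measurableSet_Ioc
    intro x hx
    have hle : f x ≤ f y := hf_mono.le_iff_le.mpr hx.2
    simp only [Pdens, if_pos hle, hfinv_left y]
    ring
  rw [h1, hsplit, hzero, add_zero, hcongr, MeasureTheory.integral_const_mul,
    intervalIntegral.integral_of_le hy.le]
end

section
/- There exist constants η > 0 and D₀ > 0, depending only on φ, f, m, M, κ, I, b, r, L, a and ε, such that for every λ ∈ E(c̄,b) and every invariant probability density ν_λ of the kernel with density P_λ, one has ν_λ(y) ≥ η for every y ∈ f(I) and D(y) := ν_λ(f(y))/λ(y) ≥ D₀ for every y ∈ I. -/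
set_option maxHeartbeats 1000000

open MeasureTheory

lemma ftc_exp_lower (A B : ℝ) (hAB : A ≤ B) (h : ℝ → ℝ)
    (hint : IntervalIntegrable h volume A B)
    (hnn : ∀ u ∈ Set.Icc A B, 0 ≤ h u) :
    1 - Real.exp (-(∫ u in A..B, h u)) ≤
      ∫ u in A..B, h u * Real.exp (-(∫ v in A..u, h v)) := by
  set F : ℝ → ℝ := fun y => ∫ v in A..y, h v with hF
  have hsubint : ∀ u v, u ∈ Set.Icc A B → v ∈ Set.Icc A B →
      IntervalIntegrable h volume u v := by
    intro u v hu hv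
    refine hint.mono_set ?_
    rw [Set.uIcc_subset_uIcc_iff_mem]
    constructor
    · exact Set.mem_uIcc_of_le hu.1 hu.2
    · exact Set.mem_uIcc_of_le hv.1 hv.2
  have hFsub : ∀ u v, u ∈ Set.Icc A B → v ∈ Set.Icc A B →
      F v - F u = ∫ x in u..v, h x := by
    intro u v hu hv
    exact intervalIntegral.integral_interval_sub_left
      (hsubint A v (Set.left_mem_Icc.2 hAB) hv) (hsubint A u (Set.left_mem_Icc.2 hAB) hu)
  have hFmono : ∀ u v, u ∈ Set.Icc A B → v ∈ Set.Icc A B → u ≤ v → F u ≤ F v := by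
    intro u v hu hv huv
    have hdiff := hFsub u v hu hv
    have : 0 ≤ ∫ x in u..v, h x := by
      apply intervalIntegral.integral_nonneg huv
      intro x hx
      exact hnn x ⟨le_trans hu.1 hx.1, le_trans hx.2 hv.2⟩
    linarith
  have hFcont : ContinuousOn F (Set.Icc A B) := by
    have := intervalIntegral.continuousOn_primitive_interval (a := A) (b := B)
      (f := h) (μ := volume) ?_
    · rwa [Set.uIcc_of_le hAB] at this
    · rw [Set.uIcc_of_le hAB]
      exact (integrableOn_Icc_iff_integrableOn_Ioc).2
        ((intervalIntegrable_iff_integrableOn_Ioc_of_le hAB).1 hint)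
  have hFA : F A = 0 := intervalIntegral.integral_same
  have hF0 : ∀ u ∈ Set.Icc A B, 0 ≤ F u := by
    intro u hu
    have := hFmono A u (Set.left_mem_Icc.2 hAB) hu hu.1
    rw [hFA] at this; exact this
  have hmodint : ∀ u v, u ∈ Set.Icc A B → v ∈ Set.Icc A B →
      IntervalIntegrable (fun u => h u * Real.exp (-(F u))) volume u v := by
    intro u v hu hv
    have hbase : IntervalIntegrable (fun w => h w * Real.exp (-(F w))) volume A B := by
      rw [intervalIntegrable_iff_integrableOn_Ioc_of_le hAB]
      have hm : AEStronglyMeasurable (fun w => h w * Real.exp (-(F w)))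
          (volume.restrict (Set.Ioc A B)) := by
        apply AEStronglyMeasurable.mul
        · exact ((intervalIntegrable_iff_integrableOn_Ioc_of_le hAB).1 hint).1
        · apply ContinuousOn.aestronglyMeasurable ?_ measurableSet_Ioc
          exact (Real.continuous_exp.comp_continuousOn
            ((hFcont.mono Set.Ioc_subset_Icc_self).neg))
      refine Integrable.mono' ((intervalIntegrable_iff_integrableOn_Ioc_of_le hAB).1 hint).norm hm ?_
      filter_upwards [ae_restrict_mem measurableSet_Ioc] with w hw
      have hw' : w ∈ Set.Icc A B := Set.Ioc_subset_Icc_self hw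
      rw [Real.norm_eq_abs, abs_mul, abs_of_nonneg (Real.exp_pos _).le]
      calc |h w| * Real.exp (-F w) ≤ |h w| * 1 := by
            apply mul_le_mul_of_nonneg_left _ (abs_nonneg _)
            rw [Real.exp_le_one_iff]
            simpa using hF0 w hw'
        _ = ‖h w‖ := by rw [mul_one, Real.norm_eq_abs]
    refine hbase.mono_set ?_
    rw [Set.uIcc_subset_uIcc_iff_mem]
    exact ⟨Set.mem_uIcc_of_le hu.1 hu.2, Set.mem_uIcc_of_le hv.1 hv.2⟩
  -- key induction
  have key : ∀ δ : ℝ, 0 < δ → ∀ n : ℕ, ∀ a', a' ∈ Set.Icc A B → F B - F a' ≤ n * δ →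
      Real.exp (-δ) * (Real.exp (-(F a')) - Real.exp (-(F B))) ≤
        ∫ u in a'..B, h u * Real.exp (-(F u)) := by
    intro δ hδ n
    induction n with
    | zero =>
      intro a' ha' hle
      have h1 : F a' ≤ F B := hFmono a' B ha' (Set.right_mem_Icc.2 hAB) ha'.2
      have h2 : F a' = F B := by norm_num at hle; linarith
      rw [h2, sub_self, mul_zero]
      apply intervalIntegral.integral_nonneg ha'.2
      intro u hu
      exact mul_nonneg (hnn u ⟨le_trans ha'.1 hu.1, hu.2⟩) (Real.exp_pos _).le
    | succ n ih =>
      intro a' ha' hle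
      push_cast at hle
      have hgen : ∀ w, w ∈ Set.Icc a' B →
          Real.exp (-(F w)) * (F w - F a') ≤ ∫ u in a'..w, h u * Real.exp (-(F u)) := by
        intro w hwmem
        have hw' : w ∈ Set.Icc A B := ⟨le_trans ha'.1 hwmem.1, hwmem.2⟩
        have hstep : ∀ u ∈ Set.Icc a' w, h u * Real.exp (-(F w)) ≤ h u * Real.exp (-(F u)) := by
          intro u hu
          have hu' : u ∈ Set.Icc A B := ⟨le_trans ha'.1 hu.1, le_trans hu.2 hw'.2⟩
          apply mul_le_mul_of_nonneg_left _ (hnn u hu')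
          apply Real.exp_le_exp.2
          simp only [neg_le_neg_iff]
          exact hFmono u w hu' hw' hu.2
        have hi1 : IntervalIntegrable (fun u => h u * Real.exp (-(F w))) volume a' w :=
          (hsubint a' w ha' hw').mul_const _
        have hmono := intervalIntegral.integral_mono_on hwmem.1 hi1 (hmodint a' w ha' hw') hstep
        calc Real.exp (-(F w)) * (F w - F a')
            = (∫ u in a'..w, h u) * Real.exp (-(F w)) := by
              rw [← hFsub a' w ha' hw']; ring
          _ = ∫ u in a'..w, h u * Real.exp (-(F w)) := by
              rw [intervalIntegral.integral_mul_const]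
          _ ≤ _ := hmono
      by_cases hc2 : F B ≤ F a' + δ
      · -- direct bound
        have hd0 : 0 ≤ F B - F a' := by
          have := hFmono a' B ha' (Set.right_mem_Icc.2 hAB) ha'.2; linarith
        have hB := hgen B (Set.right_mem_Icc.2 ha'.2)
        calc Real.exp (-δ) * (Real.exp (-(F a')) - Real.exp (-(F B)))
            = Real.exp (-δ) * Real.exp (-(F a')) * (1 - Real.exp (-(F B - F a'))) := by
              rw [mul_sub, mul_sub, ← Real.exp_add, ← Real.exp_add, ← Real.exp_add]
              ring_nf
          _ ≤ Real.exp (-δ) * Real.exp (-(F a')) * (F B - F a') := by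
              apply mul_le_mul_of_nonneg_left _ (by positivity)
              have := Real.add_one_le_exp (-(F B - F a')); linarith
          _ ≤ Real.exp (-(F B)) * (F B - F a') := by
              apply mul_le_mul_of_nonneg_right _ hd0
              rw [← Real.exp_add]
              apply Real.exp_le_exp.2
              linarith
          _ ≤ _ := hB
      · push_neg at hc2
        have hδle : F a' + δ ≤ F B := hc2.le
        have hivt := intermediate_value_Icc ha'.2 (hFcont.mono (Set.Icc_subset_Icc ha'.1 le_rfl))
        obtain ⟨w, hwmem, hFw⟩ := hivt ⟨by linarith, hδle⟩
        have hw' : w ∈ Set.Icc A B := ⟨le_trans ha'.1 hwmem.1, hwmem.2⟩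
        have hsplit : (∫ u in a'..w, h u * Real.exp (-(F u))) +
            (∫ u in w..B, h u * Real.exp (-(F u))) = ∫ u in a'..B, h u * Real.exp (-(F u)) :=
          intervalIntegral.integral_add_adjacent_intervals
            (hmodint a' w ha' hw') (hmodint w B hw' (Set.right_mem_Icc.2 hAB))
        have hbound1' : Real.exp (-δ) * (Real.exp (-(F a')) - Real.exp (-(F w))) ≤
            ∫ u in a'..w, h u * Real.exp (-(F u)) := by
          have hB := hgen w hwmem
          rw [hFw] at hB
          have hEw : Real.exp (-(F a' + δ)) = Real.exp (-(F a')) * Real.exp (-δ) := by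
            rw [← Real.exp_add]; ring_nf
          calc Real.exp (-δ) * (Real.exp (-(F a')) - Real.exp (-(F w)))
              = Real.exp (-δ) * Real.exp (-(F a')) * (1 - Real.exp (-δ)) := by
                rw [hFw, hEw]; ring
            _ ≤ Real.exp (-δ) * Real.exp (-(F a')) * δ := by
                apply mul_le_mul_of_nonneg_left _ (by positivity)
                have := Real.add_one_le_exp (-δ); linarith
            _ = Real.exp (-(F a' + δ)) * (F a' + δ - F a') := by
                rw [hEw]; ring
            _ ≤ _ := hB
        have hih : Real.exp (-δ) * (Real.exp (-(F w)) - Real.exp (-(F B))) ≤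
            ∫ u in w..B, h u * Real.exp (-(F u)) := by
          apply ih w hw'
          rw [hFw]; linarith
        calc Real.exp (-δ) * (Real.exp (-(F a')) - Real.exp (-(F B)))
            = Real.exp (-δ) * (Real.exp (-(F a')) - Real.exp (-(F w))) +
              Real.exp (-δ) * (Real.exp (-(F w)) - Real.exp (-(F B))) := by ring
          _ ≤ _ := by rw [← hsplit]; exact add_le_add hbound1' hih
  -- take δ → 0
  have hlim : Filter.Tendsto
      (fun k : ℕ => Real.exp (-(1 / ((k : ℝ) + 1))) * (1 - Real.exp (-(F B))))
      Filter.atTop (nhds (1 - Real.exp (-(F B)))) := by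
    have h0 := (tendsto_one_div_add_atTop_nhds_zero_nat (𝕜 := ℝ)).neg
    rw [neg_zero] at h0
    have h1 := (Real.continuous_exp.tendsto 0).comp h0
    rw [Real.exp_zero] at h1
    have := h1.mul_const (1 - Real.exp (-(F B)))
    simpa using this
  have goal' : 1 - Real.exp (-(F B)) ≤ ∫ u in A..B, h u * Real.exp (-(F u)) := by
    refine le_of_tendsto' hlim ?_
    intro k
    set δ := 1 / ((k : ℝ) + 1) with hδdef
    have hδ : 0 < δ := by positivity
    obtain ⟨n, hn⟩ := exists_nat_ge ((F B) / δ)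
    have hFB : F B - F A ≤ n * δ := by
      rw [hFA, sub_zero]
      rw [div_le_iff₀ hδ] at hn
      linarith
    have := key δ hδ n A (Set.left_mem_Icc.2 hAB) hFB
    rw [hFA] at this
    simp only [neg_zero, Real.exp_zero] at this
    exact this
  exact goal'

/-- there exist η > 0 and D₀ > 0, depending only on the structural data
(φ, f, m, M, κ, I, b, r, L, a, ε), such that for every λ ∈ E(c̄,b) and every invariant
probability density ν_λ of P_λ, one has ν_λ ≥ η on f(I) and
D(y) = ν_λ(f(y))/λ(y) ≥ D₀ on I. -/
theorem uniform_lower_bounds_invariant_density_and_D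
    (κ : ℝ) (hκ : κ ∈ Set.Ioo (0 : ℝ) 1)
    (f finv : ℝ → ℝ)
    (hf_mono : StrictMono f) (hf_cont : Continuous f) (hf0 : f 0 = 0)
    (hf_bound : ∀ x : ℝ, 0 < x → 0 < f x ∧ f x ≤ κ * x)
    (hfinv_left : Function.LeftInverse finv f)
    (hfinv_right : Function.RightInverse finv f)
    (g : ℝ → ℝ → ℝ) (hg_meas : Measurable (Function.uncurry g))
    (m M : ℝ → ℝ) (hm_cont : Continuous m) (hM_cont : Continuous M)
    (hm_pos : ∀ y, 0 < m y) (hM_pos : ∀ y, 0 < M y)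
    (hg_bound : ∀ x y : ℝ, 0 ≤ x → 0 < y → m y ≤ g x y ∧ g x y ≤ M y)
    (i₁ i₂ : ℝ) (hi₁ : 0 < i₁) (hi₁₂ : i₁ < i₂)
    (b r L a ε : ℝ) (hb : 0 < b) (hL : 0 < L) (ha : 0 < a) (hε : 0 < ε)
    (hr : i₂ < r)
    (hr' : finv ((-Real.log (1 - κ ^ (b + 1)) / (1 - κ ^ (b + 1))) ^ (1 / (b + 1))) ≤ r) :
    ∃ η > (0 : ℝ), ∃ D₀ > (0 : ℝ),
      ∀ lam : ℝ → ℝ, Continuous lam → (∀ x, 0 ≤ lam x) →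
      (∀ x : ℝ, r ≤ x → a * f x ^ b / m (f x) ≤ lam x) →
      IntervalIntegrable (fun u => M u * lam (finv u)) volume 0 (f r) →
      (∫ u in (0 : ℝ)..(f r), M u * lam (finv u)) ≤ L →
      (∀ x ∈ Set.Icc i₁ r, ε ≤ lam x) →
      ∀ ν : ℝ → ℝ, Measurable ν → (∀ x, 0 ≤ ν x) →
      (∫ x in Set.Ioi (0 : ℝ), ν x) = 1 →
      (∀ y : ℝ, 0 < y →
        IntegrableOn (fun x => ν x * Pdens f finv g lam x y) (Set.Ioi (0 : ℝ))) →
      (∀ y : ℝ, 0 < y →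
        ν y = ∫ x in Set.Ioi (0 : ℝ), ν x * Pdens f finv g lam x y) →
      (∀ y ∈ Set.Icc (f i₁) (f i₂), η ≤ ν y) ∧
      (∀ y ∈ Set.Icc i₁ i₂, D₀ ≤ ν (f y) / lam y) := by
  obtain ⟨hκ0, hκ1⟩ := hκ
  -- basic facts about f and finv
  have hfinv_mono : StrictMono finv := by
    intro u v huv
    have : f (finv u) < f (finv v) := by rw [hfinv_right u, hfinv_right v]; exact huv
    exact hf_mono.lt_iff_lt.1 this
  have hfinv_meas : Measurable finv := hfinv_mono.monotone.measurable
  have hfi₁0 : 0 < f i₁ := (hf_bound i₁ hi₁).1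
  have hfr0 : 0 < f r := (hf_bound r (hi₁.trans (hi₁₂.trans hr))).1
  have hfi₂r : f i₂ ≤ f r := (hf_mono hr).le
  have hfi₁₂ : f i₁ ≤ f i₂ := (hf_mono hi₁₂).le
  -- the geometric ladder
  set ρ : ℝ := (1 + κ⁻¹) / 2 with hρdef
  set θ : ℝ := (1 + κ) / 2 with hθdef
  have hρ1 : 1 < ρ := by
    have : 1 < κ⁻¹ := (one_lt_inv₀ hκ0).2 hκ1
    rw [hρdef]; linarith
  have hθ0 : 0 < θ := by rw [hθdef]; linarith
  have hθ1 : θ < 1 := by rw [hθdef]; linarith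
  have hκρ : κ * ρ = θ := by
    rw [hρdef, hθdef]; field_simp; ring
  set tn : ℕ → ℝ := fun n => i₁ * ρ ^ n with htndef
  have htn_pos : ∀ n, 0 < tn n := fun n => mul_pos hi₁ (pow_pos (by linarith) n)
  have htn_ge : ∀ n, i₁ ≤ tn n := by
    intro n
    have h1 : (1:ℝ) ≤ ρ ^ n := one_le_pow₀ hρ1.le
    calc i₁ = i₁ * 1 := by ring
      _ ≤ i₁ * ρ ^ n := by nlinarith
  have htn0 : tn 0 = i₁ := by simp [htndef]
  have htn_succ : ∀ n, tn (n+1) = ρ * tn n := by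
    intro n; simp only [htndef]; ring
  have htn_mono : Monotone tn := by
    intro p q hpq
    exact mul_le_mul_of_nonneg_left (pow_le_pow_right₀ hρ1.le hpq) hi₁.le
  have htn_top : Filter.Tendsto tn Filter.atTop Filter.atTop := by
    have := tendsto_pow_atTop_atTop_of_one_lt hρ1
    simpa [htndef] using this.const_mul_atTop hi₁
  have hftn_le : ∀ n, f (tn (n+1)) ≤ θ * tn n := by
    intro n
    calc f (tn (n+1)) ≤ κ * tn (n+1) := (hf_bound (tn (n+1)) (htn_pos (n+1))).2
      _ = θ * tn n := by rw [htn_succ n, ← hκρ]; ring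
  have hθtn_lt : ∀ n, θ * tn n < tn n := by
    intro n; nlinarith [htn_pos n]
  have hftn_pos : ∀ n, 0 < f (tn n) := fun n => (hf_bound (tn n) (htn_pos n)).1
  -- the structural minorant w
  set w : ℝ → ℝ := fun u => if u ≤ f r then ε * m u else a * u ^ b with hwdef
  have hw_nonneg : ∀ u, 0 ≤ u → 0 ≤ w u := by
    intro u hu
    simp only [hwdef]
    split_ifs
    · exact mul_nonneg hε.le (hm_pos u).le
    · exact mul_nonneg ha.le (Real.rpow_nonneg hu b)
  have hw_pos : ∀ u, 0 < u → 0 < w u := by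
    intro u hu
    simp only [hwdef]
    split_ifs
    · exact mul_pos hε (hm_pos u)
    · exact mul_pos ha (Real.rpow_pos_of_pos hu b)
  have hw_meas : Measurable w := by
    apply Measurable.ite (measurableSet_le measurable_id measurable_const)
    · exact measurable_const.mul hm_cont.measurable
    · exact measurable_const.mul (Real.continuous_rpow_const hb.le).measurable
  have hw_int : ∀ c d : ℝ, 0 ≤ c → c ≤ d → IntervalIntegrable w volume c d := by
    intro c d hc hcd
    rw [intervalIntegrable_iff_integrableOn_Ioc_of_le hcd]
    have hcont : Continuous (fun u : ℝ => ε * m u + a * u ^ b) :=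
      (continuous_const.mul hm_cont).add
        (continuous_const.mul (Real.continuous_rpow_const hb.le))
    have hbint : IntegrableOn (fun u : ℝ => ε * m u + a * u ^ b) (Set.Ioc c d) volume :=
      (intervalIntegrable_iff_integrableOn_Ioc_of_le hcd).1 (hcont.intervalIntegrable c d)
    refine Integrable.mono' hbint hw_meas.aestronglyMeasurable ?_
    filter_upwards [ae_restrict_mem measurableSet_Ioc] with u hu
    have hu0 : 0 ≤ u := le_trans hc hu.1.le
    rw [Real.norm_eq_abs, abs_of_nonneg (hw_nonneg u hu0)]
    simp only [hwdef]
    split_ifs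
    · nlinarith [Real.rpow_nonneg hu0 b, ha]
    · nlinarith [(hm_pos u).le, hε]
  -- the ladder quantities
  set β : ℕ → ℝ := fun n => ∫ u in (f (tn (n+1)))..(tn n), w u with hβdef
  have hβ_pos : ∀ n, 0 < β n := by
    intro n
    apply intervalIntegral.intervalIntegral_pos_of_pos_on
      (hw_int _ _ (hftn_pos (n+1)).le ((hftn_le n).trans (hθtn_lt n).le))
    · intro x hx
      exact hw_pos x ((hftn_pos (n+1)).trans hx.1)
    · exact lt_of_le_of_lt (hftn_le n) (hθtn_lt n)
  have hβ_nonneg : ∀ n, 0 ≤ β n := fun n => (hβ_pos n).le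
  -- choice of n₀
  have hn₀ : ∃ n₀ : ℕ, ∀ n, n₀ ≤ n → Real.exp (-β n) ≤ (1/2 : ℝ)^(n+2) := by
    have hc0 : 0 < a * (1 - θ) * i₁ := by
      have h1θ : 0 < 1 - θ := by linarith
      positivity
    have hlogρ : 0 < Real.log ρ := Real.log_pos hρ1
    have hθtend : Filter.Tendsto (fun n => θ * tn n) Filter.atTop Filter.atTop :=
      htn_top.const_mul_atTop hθ0
    have hev1 : ∀ᶠ n : ℕ in Filter.atTop, f r < θ * tn n := hθtend.eventually_gt_atTop (f r)
    have hev2 : ∀ᶠ n : ℕ in Filter.atTop, (1:ℝ) ≤ θ * tn n := hθtend.eventually_ge_atTop 1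
    have hK : Filter.Tendsto (fun n : ℕ => ρ ^ n / ((n:ℝ) * Real.log ρ))
        Filter.atTop Filter.atTop := by
      have h1 : Filter.Tendsto (fun n : ℕ => (n:ℝ) * Real.log ρ) Filter.atTop Filter.atTop :=
        tendsto_natCast_atTop_atTop.atTop_mul_const hlogρ
      have h2 := (Real.tendsto_exp_div_pow_atTop 1).comp h1
      have h2' : Filter.Tendsto
          (fun n : ℕ => Real.exp ((n:ℝ) * Real.log ρ) / ((n:ℝ) * Real.log ρ) ^ 1)
          Filter.atTop Filter.atTop := h2
      have heq : (fun n : ℕ => Real.exp ((n:ℝ) * Real.log ρ) / ((n:ℝ) * Real.log ρ) ^ 1) =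
          fun n : ℕ => ρ ^ n / ((n:ℝ) * Real.log ρ) := by
        funext n
        rw [pow_one, Real.exp_nat_mul, Real.exp_log (by linarith : (0:ℝ) < ρ)]
      rw [heq] at h2'
      exact h2'
    have hev3 := hK.eventually_ge_atTop
      ((3 * Real.log 2) / ((a * (1 - θ) * i₁) * Real.log ρ))
    have hev4 : ∀ᶠ n : ℕ in Filter.atTop, ((n:ℝ)+2) * Real.log 2 ≤ β n := by
      filter_upwards [hev1, hev2, hev3, Filter.eventually_ge_atTop 1] with n h1 h2 h3 hn1
      have htn_eq : a * ((1-θ) * tn n) = (a * (1 - θ) * i₁) * ρ ^ n := by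
        simp only [htndef]; ring
      have hnR : (1:ℝ) ≤ (n:ℝ) := by exact_mod_cast hn1
      have hlog2 : 0 < Real.log 2 := Real.log_pos one_lt_two
      have h5 : (3 * Real.log 2) / ((a * (1 - θ) * i₁) * Real.log ρ) * ((n:ℝ) * Real.log ρ)
          ≤ ρ ^ n := by
        have hpos : 0 < (n:ℝ) * Real.log ρ := by positivity
        have := (le_div_iff₀ hpos).1 h3
        linarith
      have h6 : 3 * Real.log 2 * (n:ℝ) ≤ (a * (1 - θ) * i₁) * ρ ^ n := by
        have hc' := mul_le_mul_of_nonneg_left h5 hc0.le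
        have hre : (a * (1 - θ) * i₁) *
            ((3 * Real.log 2) / ((a * (1 - θ) * i₁) * Real.log ρ) * ((n:ℝ) * Real.log ρ))
            = 3 * Real.log 2 * (n:ℝ) := by
          have h1θ' : (1:ℝ) - θ ≠ 0 := (sub_pos.2 hθ1).ne'
          field_simp
        rw [hre] at hc'
        exact hc'
      have hβlb : a * ((1-θ) * tn n) ≤ β n := by
        have hle1 : f (tn (n+1)) ≤ θ * tn n := hftn_le n
        have hle2 : θ * tn n ≤ tn n := (hθtn_lt n).le
        have hθtn0 : (0:ℝ) ≤ θ * tn n := by positivity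
        have hadj := intervalIntegral.integral_add_adjacent_intervals
          (hw_int (f (tn (n+1))) (θ * tn n) (hftn_pos (n+1)).le hle1)
          (hw_int (θ * tn n) (tn n) hθtn0 hle2)
        have hnn1 : 0 ≤ ∫ u in (f (tn (n+1)))..(θ * tn n), w u :=
          intervalIntegral.integral_nonneg hle1
            (fun u hu => hw_nonneg u (le_trans (hftn_pos (n+1)).le hu.1))
        have hconst : a * ((1-θ) * tn n) ≤ ∫ u in (θ * tn n)..(tn n), w u := by
          have hptw : ∀ u ∈ Set.Icc (θ * tn n) (tn n), a ≤ w u := by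
            intro u hu
            have hur : f r < u := lt_of_lt_of_le h1 hu.1
            have hu1 : (1:ℝ) ≤ u := le_trans h2 hu.1
            simp only [hwdef]
            rw [if_neg (not_le.2 hur)]
            have hub : (1:ℝ) ≤ u ^ b := Real.one_le_rpow hu1 hb.le
            nlinarith
          have hmono := intervalIntegral.integral_mono_on hle2
            (intervalIntegrable_const (c := a)) (hw_int (θ * tn n) (tn n) hθtn0 hle2) hptw
          rw [intervalIntegral.integral_const, smul_eq_mul] at hmono
          calc a * ((1-θ) * tn n) = (tn n - θ * tn n) * a := by ring
            _ ≤ _ := hmono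
        have hβeq : β n = (∫ u in (f (tn (n+1)))..(θ * tn n), w u) +
            ∫ u in (θ * tn n)..(tn n), w u := by
          simp only [hβdef]
          exact hadj.symm
        linarith
      have harith : ((n:ℝ)+2) * Real.log 2 ≤ 3 * Real.log 2 * (n:ℝ) := by nlinarith
      calc ((n:ℝ)+2) * Real.log 2 ≤ 3 * Real.log 2 * (n:ℝ) := harith
        _ ≤ (a * (1 - θ) * i₁) * ρ ^ n := h6
        _ = a * ((1-θ) * tn n) := htn_eq.symm
        _ ≤ β n := hβlb
    obtain ⟨n₀, hn₀'⟩ := Filter.eventually_atTop.1 hev4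
    refine ⟨n₀, fun n hn => ?_⟩
    have h := hn₀' n hn
    have heq : Real.exp (-(((n:ℝ)+2) * Real.log 2)) = (1/2:ℝ)^(n+2) := by
      rw [show -(((n:ℝ)+2) * Real.log 2) = ((n+2 : ℕ):ℝ) * (-Real.log 2) by push_cast; ring,
        Real.exp_nat_mul, Real.exp_neg, Real.exp_log two_pos]
      norm_num
    calc Real.exp (-β n) ≤ Real.exp (-(((n:ℝ)+2) * Real.log 2)) :=
          Real.exp_le_exp.2 (neg_le_neg h)
      _ = (1/2:ℝ)^(n+2) := heq
  obtain ⟨n₀, hn₀⟩ := hn₀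
  set P₀ : ℝ := ∏ n ∈ Finset.range n₀, (1 - Real.exp (-β n)) with hP₀def
  have hfac_pos : ∀ n : ℕ, 0 < 1 - Real.exp (-β n) := by
    intro n
    have : Real.exp (-β n) < 1 := by
      rw [Real.exp_lt_one_iff]; linarith [hβ_pos n]
    linarith
  have hfac_le1 : ∀ n : ℕ, 1 - Real.exp (-β n) ≤ 1 := by
    intro n; have := Real.exp_pos (-β n); linarith
  have hP₀_pos : 0 < P₀ := Finset.prod_pos fun n _ => hfac_pos n
  -- minimum of m on [f i₁, f i₂]
  obtain ⟨z₀, hz₀mem, hz₀min⟩ := (isCompact_Icc (a := f i₁) (b := f i₂)).exists_isMinOn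
    (Set.nonempty_Icc.2 hfi₁₂) hm_cont.continuousOn
  set mstar : ℝ := m z₀ with hmstardef
  have hmstar0 : 0 < mstar := hm_pos z₀
  have hmstar_le : ∀ z ∈ Set.Icc (f i₁) (f i₂), mstar ≤ m z := fun z hz => hz₀min hz
  set η₀ : ℝ := P₀ / 4 with hη₀def
  have hη₀_pos : 0 < η₀ := by positivity
  refine ⟨ε * (mstar * Real.exp (-L) * η₀), by positivity,
    mstar * Real.exp (-L) * η₀, by positivity, ?_⟩
  intro lam hlam_cont hlam_nn hlam_ge hlam_int hlam_L hlam_eps ν hν_meas hν_nn hν1 hPint hinv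
  -- integrability of ν
  have hν_int : IntegrableOn ν (Set.Ioi (0:ℝ)) volume := by
    by_contra hcon
    rw [MeasureTheory.integral_undef hcon] at hν1
    norm_num at hν1
  -- nonnegativity of the kernel
  have hP_nonneg : ∀ x y : ℝ, 0 < x → 0 ≤ Pdens f finv g lam x y := by
    intro x y hx
    unfold Pdens
    split_ifs with hxy
    · have hy0 : 0 < y := lt_of_lt_of_le (hf_bound x hx).1 hxy
      have h3 : 0 ≤ g x y := le_trans (hm_pos y).le (hg_bound x y hx.le hy0).1
      exact mul_nonneg (mul_nonneg (hlam_nn _) h3) (Real.exp_pos _).le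
    · exact le_refl 0
  -- integrability of q x = lam (finv ·) * g x ·
  have hq_int : ∀ x c d : ℝ, 0 ≤ x → 0 ≤ c → c ≤ d →
      IntervalIntegrable (fun u => lam (finv u) * g x u) volume c d := by
    intro x c d hx hc hcd
    rw [intervalIntegrable_iff_integrableOn_Ioc_of_le hcd]
    obtain ⟨C1, hC1⟩ := (isCompact_Icc (a := finv c) (b := finv d)).exists_bound_of_continuousOn
      hlam_cont.continuousOn
    obtain ⟨C2, hC2⟩ := (isCompact_Icc (a := c) (b := d)).exists_bound_of_continuousOn
      hM_cont.continuousOn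
    have hC1' : 0 ≤ C1 :=
      le_trans (norm_nonneg _) (hC1 (finv c) (Set.left_mem_Icc.2 (hfinv_mono.monotone hcd)))
    refine Integrable.mono' (g := fun _ => C1 * C2)
      (integrableOn_const measure_Ioc_lt_top.ne)
      ((hlam_cont.measurable.comp hfinv_meas).mul
        (hg_meas.comp measurable_prodMk_left)).aestronglyMeasurable ?_
    filter_upwards [ae_restrict_mem measurableSet_Ioc] with u hu
    have hu0 : 0 < u := lt_of_le_of_lt hc hu.1
    have h1 : lam (finv u) ≤ C1 := le_trans (le_abs_self _)
      (hC1 (finv u) ⟨hfinv_mono.monotone hu.1.le, hfinv_mono.monotone hu.2⟩)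
    have h2 : g x u ≤ C2 := le_trans (hg_bound x u hx hu0).2
      (le_trans (le_abs_self _) (hC2 u ⟨hu.1.le, hu.2⟩))
    have h3 : 0 ≤ g x u := le_trans (hm_pos u).le (hg_bound x u hx hu0).1
    rw [Real.norm_eq_abs, abs_of_nonneg (mul_nonneg (hlam_nn _) h3)]
    exact mul_le_mul h1 h2 h3 hC1'
  have hq_nonneg : ∀ x u : ℝ, 0 ≤ x → 0 < u → 0 ≤ lam (finv u) * g x u := by
    intro x u hx hu
    exact mul_nonneg (hlam_nn _) (le_trans (hm_pos u).le (hg_bound x u hx hu).1)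
  -- pointwise comparison with w
  have hwq : ∀ x u : ℝ, 0 ≤ x → f i₁ ≤ u → w u ≤ lam (finv u) * g x u := by
    intro x u hx hui
    have hu0 : 0 < u := lt_of_lt_of_le hfi₁0 hui
    have hgm : m u ≤ g x u := (hg_bound x u hx hu0).1
    simp only [hwdef]
    split_ifs with hur
    · have h1 : i₁ ≤ finv u := by
        have := hfinv_mono.monotone hui
        rwa [hfinv_left i₁] at this
      have h2 : finv u ≤ r := by
        have := hfinv_mono.monotone hur
        rwa [hfinv_left r] at this
      exact mul_le_mul (hlam_eps (finv u) ⟨h1, h2⟩) hgm (hm_pos u).le (hlam_nn _)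
    · push_neg at hur
      have h2 : r ≤ finv u := by
        have := hfinv_mono.monotone hur.le
        rwa [hfinv_left r] at this
      have h3 := hlam_ge (finv u) h2
      rw [hfinv_right u] at h3
      have h4 : a * u ^ b / m u * m u = a * u ^ b :=
        div_mul_cancel₀ _ (hm_pos u).ne'
      rw [← h4]
      exact mul_le_mul h3 hgm (hm_pos u).le (hlam_nn _)
  -- joint measurability of the kernel
  have hPdens_jm : Measurable (fun p : ℝ × ℝ => Pdens f finv g lam p.1 p.2) := by
    have hS : Measurable (fun q : (ℝ × ℝ) × ℝ =>
        if f q.1.1 < q.2 ∧ q.2 ≤ q.1.2 then lam (finv q.2) * g q.1.1 q.2 else 0) := by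
      apply Measurable.ite
      · apply MeasurableSet.inter
        · exact measurableSet_lt
            (hf_cont.measurable.comp (measurable_fst.comp measurable_fst)) measurable_snd
        · exact measurableSet_le measurable_snd (measurable_snd.comp measurable_fst)
      · exact ((hlam_cont.measurable.comp hfinv_meas).comp measurable_snd).mul
          (hg_meas.comp ((measurable_fst.comp measurable_fst).prodMk measurable_snd))
      · exact measurable_const
    have hK := (hS.stronglyMeasurable.integral_prod_right' (ν := volume)).measurable
    have heq : (fun p : ℝ × ℝ => Pdens f finv g lam p.1 p.2) = fun p : ℝ × ℝ =>
        if f p.1 ≤ p.2 then lam (finv p.2) * g p.1 p.2 *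
          Real.exp (-(∫ u, (if f p.1 < u ∧ u ≤ p.2 then lam (finv u) * g p.1 u else 0))) else 0 := by
      funext p
      unfold Pdens
      split_ifs with hc
      · congr 2
        rw [intervalIntegral.integral_of_le hc, ← MeasureTheory.integral_indicator measurableSet_Ioc]
        simp only [Set.indicator_apply, Set.mem_Ioc]
      · rfl
    rw [heq]
    apply Measurable.ite (measurableSet_le (hf_cont.measurable.comp measurable_fst) measurable_snd)
    · exact (((hlam_cont.measurable.comp hfinv_meas).comp measurable_snd).mul hg_meas).mul
        (Real.measurable_exp.comp hK.neg)
    · exact measurable_const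
  have hPy_meas : ∀ x : ℝ, Measurable (fun y => Pdens f finv g lam x y) :=
    fun x => hPdens_jm.comp measurable_prodMk_left
  -- integrability of the kernel in y on bounded sets
  have hPy_int : ∀ x T : ℝ, 0 < x → IntegrableOn (fun y => Pdens f finv g lam x y)
      (Set.Ioc (0:ℝ) T) volume := by
    intro x T hx
    obtain ⟨C1, hC1⟩ := (isCompact_Icc (a := finv 0) (b := finv T)).exists_bound_of_continuousOn
      hlam_cont.continuousOn
    obtain ⟨C2, hC2⟩ := (isCompact_Icc (a := (0:ℝ)) (b := T)).exists_bound_of_continuousOn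
      hM_cont.continuousOn
    by_cases hT : T ≤ 0
    · rw [Set.Ioc_eq_empty (not_lt.2 hT)]
      simp [IntegrableOn]
    push_neg at hT
    have hC1' : 0 ≤ C1 := le_trans (norm_nonneg _)
      (hC1 (finv 0) (Set.left_mem_Icc.2 (hfinv_mono.monotone hT.le)))
    have hC2' : 0 ≤ C2 := le_trans (norm_nonneg _) (hC2 0 (Set.left_mem_Icc.2 hT.le))
    refine Integrable.mono' (g := fun _ => C1 * C2)
      (integrableOn_const measure_Ioc_lt_top.ne)
      (hPy_meas x).aestronglyMeasurable ?_
    filter_upwards [ae_restrict_mem measurableSet_Ioc] with y hy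
    have hy0 : 0 < y := hy.1
    rw [Real.norm_eq_abs, abs_of_nonneg (hP_nonneg x y hx)]
    unfold Pdens
    split_ifs with hxy
    · have h1 : lam (finv y) ≤ C1 := le_trans (le_abs_self _)
        (hC1 (finv y) ⟨hfinv_mono.monotone hy.1.le, hfinv_mono.monotone hy.2⟩)
      have h2 : g x y ≤ C2 := le_trans (hg_bound x y hx.le hy0).2
        (le_trans (le_abs_self _) (hC2 y ⟨hy.1.le, hy.2⟩))
      have h3 : 0 ≤ g x y := le_trans (hm_pos y).le (hg_bound x y hx.le hy0).1
      have h4 : Real.exp (-(∫ u in (f x)..y, lam (finv u) * g x u)) ≤ 1 := by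
        rw [Real.exp_le_one_iff, neg_nonpos]
        apply intervalIntegral.integral_nonneg hxy
        intro u hu
        exact hq_nonneg x u hx.le (lt_of_lt_of_le (hf_bound x hx).1 hu.1)
      calc lam (finv y) * g x y * Real.exp (-(∫ u in (f x)..y, lam (finv u) * g x u))
          ≤ lam (finv y) * g x y * 1 :=
            mul_le_mul_of_nonneg_left h4 (mul_nonneg (hlam_nn _) h3)
        _ = lam (finv y) * g x y := by ring
        _ ≤ C1 * C2 := mul_le_mul h1 h2 h3 hC1'
    · exact mul_nonneg hC1' hC2'
  -- subintegral bound for M·lam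
  have hMlam_nonneg : ∀ u : ℝ, 0 ≤ M u * lam (finv u) :=
    fun u => mul_nonneg (hM_pos u).le (hlam_nn _)
  have hIab : ∀ c d : ℝ, 0 ≤ c → c ≤ d → d ≤ f r →
      IntervalIntegrable (fun u => M u * lam (finv u)) volume c d := by
    intro c d hc hcd hdr
    refine hlam_int.mono_set ?_
    rw [Set.uIcc_subset_uIcc_iff_mem, Set.uIcc_of_le hfr0.le]
    exact ⟨⟨hc, hcd.trans hdr⟩, ⟨hc.trans hcd, hdr⟩⟩
  have hL_sub : ∀ c d : ℝ, 0 ≤ c → c ≤ d → d ≤ f r →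
      (∫ u in c..d, M u * lam (finv u)) ≤ L := by
    intro c d hc hcd hdr
    have e1 := intervalIntegral.integral_add_adjacent_intervals
      (hIab 0 c le_rfl hc (hcd.trans hdr)) (hIab c d hc hcd hdr)
    have e2 := intervalIntegral.integral_add_adjacent_intervals
      (hIab 0 d le_rfl (hc.trans hcd) hdr) (hIab d (f r) (hc.trans hcd) hdr le_rfl)
    -- note: third argument of hIab is d ≤ f r
    have p1 : 0 ≤ ∫ u in (0:ℝ)..c, M u * lam (finv u) :=
      intervalIntegral.integral_nonneg hc (fun u _ => hMlam_nonneg u)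
    have p3 : 0 ≤ ∫ u in d..(f r), M u * lam (finv u) :=
      intervalIntegral.integral_nonneg hdr (fun u _ => hMlam_nonneg u)
    linarith [hlam_L]
  -- THE MASS TRANSFER INEQUALITY
  have key : ∀ s τ : ℝ, i₁ ≤ s → f s ≤ τ →
      (1 - Real.exp (-(∫ u in (f s)..τ, w u))) * (∫ x in Set.Ioc (0:ℝ) s, ν x) ≤
        ∫ y in Set.Ioc (0:ℝ) τ, ν y := by
    intro s τ hs hsτ
    have hs0 : 0 < s := lt_of_lt_of_le hi₁ hs
    have hfs0 : 0 < f s := (hf_bound s hs0).1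
    have hτ0 : 0 < τ := lt_of_lt_of_le hfs0 hsτ
    set β' : ℝ := ∫ u in (f s)..τ, w u with hβ'def
    have hβ'0 : 0 ≤ β' := intervalIntegral.integral_nonneg hsτ
      (fun u hu => hw_nonneg u (le_trans hfs0.le hu.1))
    have hexp1 : Real.exp (-β') ≤ 1 := by rw [Real.exp_le_one_iff]; linarith
    have hxbound : ∀ x ∈ Set.Ioc (0:ℝ) s,
        1 - Real.exp (-β') ≤ ∫ y in Set.Ioc (0:ℝ) τ, Pdens f finv g lam x y := by
      intro x hx
      have hx0 : 0 < x := hx.1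
      have hfx0 : 0 < f x := (hf_bound x hx0).1
      have hfxfs : f x ≤ f s := hf_mono.monotone hx.2
      have hfxτ : f x ≤ τ := hfxfs.trans hsτ
      have hun : Set.Ioc (0:ℝ) (f x) ∪ Set.Ioc (f x) τ = Set.Ioc 0 τ :=
        Set.Ioc_union_Ioc_eq_Ioc hfx0.le hfxτ
      have hi1 : IntegrableOn (fun y => Pdens f finv g lam x y) (Set.Ioc (0:ℝ) (f x)) volume :=
        (hPy_int x τ hx0).mono_set (Set.Ioc_subset_Ioc le_rfl hfxτ)
      have hi2 : IntegrableOn (fun y => Pdens f finv g lam x y) (Set.Ioc (f x) τ) volume :=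
        (hPy_int x τ hx0).mono_set (Set.Ioc_subset_Ioc hfx0.le le_rfl)
      have hsplit : ∫ y in Set.Ioc (0:ℝ) τ, Pdens f finv g lam x y =
          (∫ y in Set.Ioc (0:ℝ) (f x), Pdens f finv g lam x y) +
          ∫ y in Set.Ioc (f x) τ, Pdens f finv g lam x y := by
        rw [← hun, MeasureTheory.setIntegral_union (Set.Ioc_disjoint_Ioc_of_le le_rfl)
          measurableSet_Ioc hi1 hi2]
      have hzero : ∫ y in Set.Ioc (0:ℝ) (f x), Pdens f finv g lam x y = 0 := by
        have hae : ∀ᵐ y ∂volume, y ∈ Set.Ioc (0:ℝ) (f x) →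
            Pdens f finv g lam x y = (0:ℝ) := by
          filter_upwards [measure_eq_zero_iff_ae_notMem.mp (measure_singleton (f x))] with y hy hymem
          have hlt : y < f x := lt_of_le_of_ne hymem.2 (by simpa using hy)
          unfold Pdens
          rw [if_neg (not_le.2 hlt)]
        rw [MeasureTheory.setIntegral_congr_ae measurableSet_Ioc hae]
        simp
      have heq2 : ∫ y in Set.Ioc (f x) τ, Pdens f finv g lam x y =
          ∫ y in (f x)..τ, (lam (finv y) * g x y) *
            Real.exp (-(∫ u in (f x)..y, lam (finv u) * g x u)) := by
        rw [intervalIntegral.integral_of_le hfxτ]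
        apply setIntegral_congr_fun measurableSet_Ioc
        intro y hy
        unfold Pdens
        rw [if_pos hy.1.le]
      have hftc := ftc_exp_lower (f x) τ hfxτ (fun u => lam (finv u) * g x u)
        (hq_int x (f x) τ hx0.le hfx0.le hfxτ)
        (fun u hu => hq_nonneg x u hx0.le (lt_of_lt_of_le hfx0 hu.1))
      have hcomp : β' ≤ ∫ u in (f x)..τ, lam (finv u) * g x u := by
        have hadj := intervalIntegral.integral_add_adjacent_intervals
          (hq_int x (f x) (f s) hx0.le hfx0.le hfxfs) (hq_int x (f s) τ hx0.le hfs0.le hsτ)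
        have h1 : 0 ≤ ∫ u in (f x)..(f s), lam (finv u) * g x u :=
          intervalIntegral.integral_nonneg hfxfs
            (fun u hu => hq_nonneg x u hx0.le (lt_of_lt_of_le hfx0 hu.1))
        have h2 : β' ≤ ∫ u in (f s)..τ, lam (finv u) * g x u := by
          rw [hβ'def]
          apply intervalIntegral.integral_mono_on hsτ (hw_int (f s) τ hfs0.le hsτ)
            (hq_int x (f s) τ hx0.le hfs0.le hsτ)
          intro u hu
          exact hwq x u hx0.le (le_trans (hf_mono.monotone hs) hu.1)
        linarith
      rw [hsplit, hzero, zero_add, heq2]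
      calc 1 - Real.exp (-β')
          ≤ 1 - Real.exp (-(∫ u in (f x)..τ, lam (finv u) * g x u)) := by
            have := Real.exp_le_exp.2 (neg_le_neg hcomp); linarith
        _ ≤ _ := hftc
    have hΦ_jm : Measurable (fun p : ℝ × ℝ => ν p.1 * Pdens f finv g lam p.1 p.2) :=
      (hν_meas.comp measurable_fst).mul hPdens_jm
    have hGt_eq : ∫ y in Set.Ioc (0:ℝ) τ, ν y =
        (∫⁻ y in Set.Ioc (0:ℝ) τ, ENNReal.ofReal (ν y)).toReal :=
      MeasureTheory.integral_eq_lintegral_of_nonneg_ae (ae_of_all _ hν_nn)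
        hν_meas.aestronglyMeasurable
    have hlint_eq : ∫⁻ y in Set.Ioc (0:ℝ) τ, ENNReal.ofReal (ν y) =
        ∫⁻ y in Set.Ioc (0:ℝ) τ, ∫⁻ x in Set.Ioi (0:ℝ),
          ENNReal.ofReal (ν x * Pdens f finv g lam x y) := by
      apply MeasureTheory.setLIntegral_congr_fun measurableSet_Ioc
      intro y hy
      beta_reduce
      rw [hinv y hy.1]
      apply MeasureTheory.ofReal_integral_eq_lintegral_ofReal (hPint y hy.1)
      rw [Filter.EventuallyLE, MeasureTheory.ae_restrict_iff' measurableSet_Ioi]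
      apply ae_of_all
      intro x hx
      exact mul_nonneg (hν_nn x) (hP_nonneg x y hx)
    have hswap : (∫⁻ y in Set.Ioc (0:ℝ) τ, ∫⁻ x in Set.Ioi (0:ℝ),
          ENNReal.ofReal (ν x * Pdens f finv g lam x y))
        = ∫⁻ x in Set.Ioi (0:ℝ), ∫⁻ y in Set.Ioc (0:ℝ) τ,
          ENNReal.ofReal (ν x * Pdens f finv g lam x y) := by
      apply MeasureTheory.lintegral_lintegral_swap
      apply Measurable.aemeasurable
      exact (ENNReal.measurable_ofReal.comp hΦ_jm).comp measurable_swap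
    have hinnermeas : Measurable (fun x => ∫⁻ y in Set.Ioc (0:ℝ) τ,
        ENNReal.ofReal (ν x * Pdens f finv g lam x y)) :=
      Measurable.lintegral_prod_right' (ENNReal.measurable_ofReal.comp hΦ_jm)
    have hrestr : (∫⁻ x in Set.Ioc (0:ℝ) s, ∫⁻ y in Set.Ioc (0:ℝ) τ,
          ENNReal.ofReal (ν x * Pdens f finv g lam x y))
        ≤ ∫⁻ x in Set.Ioi (0:ℝ), ∫⁻ y in Set.Ioc (0:ℝ) τ,
          ENNReal.ofReal (ν x * Pdens f finv g lam x y) :=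
      lintegral_mono' (Measure.restrict_mono Set.Ioc_subset_Ioi_self le_rfl) le_rfl
    have hinner_lb : ∀ x ∈ Set.Ioc (0:ℝ) s,
        ENNReal.ofReal (ν x * (1 - Real.exp (-β'))) ≤
          ∫⁻ y in Set.Ioc (0:ℝ) τ, ENNReal.ofReal (ν x * Pdens f finv g lam x y) := by
      intro x hx
      have heq3 : ENNReal.ofReal (∫ y in Set.Ioc (0:ℝ) τ, ν x * Pdens f finv g lam x y) =
          ∫⁻ y in Set.Ioc (0:ℝ) τ, ENNReal.ofReal (ν x * Pdens f finv g lam x y) := by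
        apply MeasureTheory.ofReal_integral_eq_lintegral_ofReal
        · exact (hPy_int x τ hx.1).const_mul _
        · rw [Filter.EventuallyLE, MeasureTheory.ae_restrict_iff' measurableSet_Ioc]
          apply ae_of_all
          intro y hy
          exact mul_nonneg (hν_nn x) (hP_nonneg x y hx.1)
      rw [← heq3]
      apply ENNReal.ofReal_le_ofReal
      rw [MeasureTheory.integral_const_mul]
      exact mul_le_mul_of_nonneg_left (hxbound x hx) (hν_nn x)
    have hstep : ENNReal.ofReal ((∫ x in Set.Ioc (0:ℝ) s, ν x) * (1 - Real.exp (-β'))) ≤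
        ∫⁻ y in Set.Ioc (0:ℝ) τ, ENNReal.ofReal (ν y) := by
      have hleft : ENNReal.ofReal ((∫ x in Set.Ioc (0:ℝ) s, ν x) * (1 - Real.exp (-β'))) =
          ∫⁻ x in Set.Ioc (0:ℝ) s, ENNReal.ofReal (ν x * (1 - Real.exp (-β'))) := by
        rw [← MeasureTheory.integral_mul_const]
        apply MeasureTheory.ofReal_integral_eq_lintegral_ofReal
        · exact (hν_int.mono_set Set.Ioc_subset_Ioi_self).mul_const _
        · rw [Filter.EventuallyLE, MeasureTheory.ae_restrict_iff' measurableSet_Ioc]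
          apply ae_of_all
          intro x _
          exact mul_nonneg (hν_nn x) (by linarith)
      rw [hleft, hlint_eq, hswap]
      exact le_trans (MeasureTheory.setLIntegral_mono hinnermeas hinner_lb) hrestr
    have hfin : (∫⁻ y in Set.Ioc (0:ℝ) τ, ENNReal.ofReal (ν y)) ≠ ⊤ := by
      have h1 : (∫⁻ y in Set.Ioc (0:ℝ) τ, ENNReal.ofReal (ν y)) ≤
          ∫⁻ y in Set.Ioi (0:ℝ), ENNReal.ofReal (ν y) :=
        lintegral_mono' (Measure.restrict_mono Set.Ioc_subset_Ioi_self le_rfl) le_rfl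
      have h2 : (∫⁻ y in Set.Ioi (0:ℝ), ENNReal.ofReal (ν y)) = ENNReal.ofReal 1 := by
        rw [← hν1]
        exact (MeasureTheory.ofReal_integral_eq_lintegral_ofReal hν_int
          (ae_of_all _ hν_nn)).symm
      exact ne_of_lt (lt_of_le_of_lt (h1.trans_eq h2) ENNReal.ofReal_lt_top)
    have hmain := ENNReal.toReal_mono hfin hstep
    rw [ENNReal.toReal_ofReal (mul_nonneg
      (setIntegral_nonneg measurableSet_Ioc fun x _ => hν_nn x) (by linarith))] at hmain
    rw [hGt_eq, mul_comm]
    exact hmain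
  -- pointwise lower bound on ν
  have point : ∀ z : ℝ, f i₁ ≤ z → z ≤ f i₂ →
      lam (finv z) * (mstar * Real.exp (-L)) * (∫ x in Set.Ioc (0:ℝ) i₁, ν x) ≤ ν z := by
    intro z hz1 hz2
    have hz0 : 0 < z := lt_of_lt_of_le hfi₁0 hz1
    have hC : ∀ x ∈ Set.Ioc (0:ℝ) i₁,
        ν x * (lam (finv z) * (mstar * Real.exp (-L))) ≤ ν x * Pdens f finv g lam x z := by
      intro x hx
      apply mul_le_mul_of_nonneg_left _ (hν_nn x)
      have hx0 : 0 < x := hx.1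
      have hfx0 : 0 < f x := (hf_bound x hx0).1
      have hfxz : f x ≤ z := le_trans (hf_mono.monotone hx.2) hz1
      unfold Pdens
      rw [if_pos hfxz]
      have hzfr : z ≤ f r := hz2.trans hfi₂r
      have hIq : (∫ u in (f x)..z, lam (finv u) * g x u) ≤ L := by
        have h1 : (∫ u in (f x)..z, lam (finv u) * g x u) ≤
            ∫ u in (f x)..z, M u * lam (finv u) := by
          apply intervalIntegral.integral_mono_on hfxz (hq_int x (f x) z hx0.le hfx0.le hfxz)
            (hIab (f x) z hfx0.le hfxz hzfr)
          intro u hu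
          have hu0 : 0 < u := lt_of_lt_of_le hfx0 hu.1
          calc lam (finv u) * g x u ≤ lam (finv u) * M u :=
                mul_le_mul_of_nonneg_left (hg_bound x u hx0.le hu0).2 (hlam_nn _)
            _ = M u * lam (finv u) := mul_comm _ _
        exact h1.trans (hL_sub (f x) z hfx0.le hfxz hzfr)
      have hexp : Real.exp (-L) ≤ Real.exp (-(∫ u in (f x)..z, lam (finv u) * g x u)) :=
        Real.exp_le_exp.2 (neg_le_neg hIq)
      have hgm : mstar ≤ g x z := le_trans (hmstar_le z ⟨hz1, hz2⟩) (hg_bound x z hx0.le hz0).1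
      calc lam (finv z) * (mstar * Real.exp (-L))
          ≤ lam (finv z) * (g x z * Real.exp (-(∫ u in (f x)..z, lam (finv u) * g x u))) := by
            apply mul_le_mul_of_nonneg_left _ (hlam_nn _)
            exact mul_le_mul hgm hexp (Real.exp_pos _).le (le_trans hmstar0.le hgm)
        _ = lam (finv z) * g x z * Real.exp (-(∫ u in (f x)..z, lam (finv u) * g x u)) := by
            ring
    have hstep1 : (∫ x in Set.Ioc (0:ℝ) i₁, ν x * (lam (finv z) * (mstar * Real.exp (-L)))) ≤
        ∫ x in Set.Ioc (0:ℝ) i₁, ν x * Pdens f finv g lam x z :=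
      setIntegral_mono_on ((hν_int.mono_set Set.Ioc_subset_Ioi_self).mul_const _)
        ((hPint z hz0).mono_set Set.Ioc_subset_Ioi_self) measurableSet_Ioc hC
    have hstep2 : (∫ x in Set.Ioc (0:ℝ) i₁, ν x * Pdens f finv g lam x z) ≤
        ∫ x in Set.Ioi (0:ℝ), ν x * Pdens f finv g lam x z := by
      apply setIntegral_mono_set (hPint z hz0) ?_
        (HasSubset.Subset.eventuallyLE Set.Ioc_subset_Ioi_self)
      rw [Filter.EventuallyLE, MeasureTheory.ae_restrict_iff' measurableSet_Ioi]
      apply ae_of_all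
      intro x hx
      exact mul_nonneg (hν_nn x) (hP_nonneg x z hx)
    rw [hinv z hz0]
    calc lam (finv z) * (mstar * Real.exp (-L)) * (∫ x in Set.Ioc (0:ℝ) i₁, ν x)
        = ∫ x in Set.Ioc (0:ℝ) i₁, ν x * (lam (finv z) * (mstar * Real.exp (-L))) := by
          rw [MeasureTheory.integral_mul_const]
          ring
      _ ≤ _ := hstep1.trans hstep2
  -- lower bound for the mass near 0
  have la1 : ∀ n : ℕ, (1 - Real.exp (-β n)) * (∫ x in Set.Ioc (0:ℝ) (tn (n+1)), ν x) ≤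
      ∫ x in Set.Ioc (0:ℝ) (tn n), ν x := by
    intro n
    have := key (tn (n+1)) (tn n) (htn_ge (n+1)) ((hftn_le n).trans (hθtn_lt n).le)
    simpa only [hβdef] using this
  have Gnn : ∀ n : ℕ, 0 ≤ ∫ x in Set.Ioc (0:ℝ) (tn n), ν x := fun n =>
    setIntegral_nonneg measurableSet_Ioc fun x _ => hν_nn x
  have la2 : ∀ k : ℕ, (∏ n ∈ Finset.range k, (1 - Real.exp (-β n))) *
      (∫ x in Set.Ioc (0:ℝ) (tn k), ν x) ≤ ∫ x in Set.Ioc (0:ℝ) (tn 0), ν x := by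
    intro k
    induction k with
    | zero => simp
    | succ k ih =>
      have hprod_nn : 0 ≤ ∏ n ∈ Finset.range k, (1 - Real.exp (-β n)) :=
        Finset.prod_nonneg fun n _ => (hfac_pos n).le
      calc (∏ n ∈ Finset.range (k+1), (1 - Real.exp (-β n))) *
            (∫ x in Set.Ioc (0:ℝ) (tn (k+1)), ν x)
          = (∏ n ∈ Finset.range k, (1 - Real.exp (-β n))) *
            ((1 - Real.exp (-β k)) * (∫ x in Set.Ioc (0:ℝ) (tn (k+1)), ν x)) := by
            rw [Finset.prod_range_succ]; ring
        _ ≤ (∏ n ∈ Finset.range k, (1 - Real.exp (-β n))) *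
            (∫ x in Set.Ioc (0:ℝ) (tn k), ν x) :=
            mul_le_mul_of_nonneg_left (la1 k) hprod_nn
        _ ≤ _ := ih
  have hSsum : ∀ k : ℕ, (∑ n ∈ Finset.Ico n₀ k, Real.exp (-β n)) ≤ 1/2 := by
    intro k
    have h1 : (∑ n ∈ Finset.Ico n₀ k, Real.exp (-β n)) ≤
        ∑ n ∈ Finset.Ico n₀ k, (1/2:ℝ)^(n+2) :=
      Finset.sum_le_sum fun n hn => hn₀ n (Finset.mem_Ico.1 hn).1
    have h2 : (∑ n ∈ Finset.Ico n₀ k, (1/2:ℝ)^(n+2)) ≤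
        ∑ n ∈ Finset.range k, (1/2:ℝ)^(n+2) := by
      apply Finset.sum_le_sum_of_subset_of_nonneg
      · intro n hn
        exact Finset.mem_range.2 (Finset.mem_Ico.1 hn).2
      · intro n _ _
        positivity
    have h3 : (∑ n ∈ Finset.range k, (1/2:ℝ)^(n+2)) ≤ 1/2 := by
      have e : ∀ n ∈ Finset.range k, ((1:ℝ)/2)^(n+2) = (1/4) * (1/2)^n := by
        intro n _
        rw [pow_add]; ring
      rw [Finset.sum_congr rfl e, ← Finset.mul_sum, geom_sum_eq (by norm_num : (1/2:ℝ) ≠ 1) k]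
      have hp : (0:ℝ) ≤ (1/2:ℝ)^k := by positivity
      have hcal : (1/4:ℝ) * (((1/2:ℝ)^k - 1)/(1/2 - 1)) = (1 - (1/2:ℝ)^k)/2 := by ring
      rw [hcal]
      linarith
    linarith
  have hW : ∀ k : ℕ, n₀ ≤ k → 1 - (∑ n ∈ Finset.Ico n₀ k, Real.exp (-β n)) ≤
      ∏ n ∈ Finset.Ico n₀ k, (1 - Real.exp (-β n)) := by
    intro k hk
    induction k, hk using Nat.le_induction with
    | base => simp
    | succ k hk ih =>
      rw [Finset.prod_Ico_succ_top hk, Finset.sum_Ico_succ_top hk]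
      have hS_nn : 0 ≤ ∑ n ∈ Finset.Ico n₀ k, Real.exp (-β n) :=
        Finset.sum_nonneg fun n _ => (Real.exp_pos _).le
      have he_nn : 0 ≤ Real.exp (-β k) := (Real.exp_pos _).le
      have hfk := hfac_pos k
      have hmul := mul_le_mul_of_nonneg_right ih hfk.le
      nlinarith [mul_nonneg hS_nn he_nn]
  have prodlb : ∀ k : ℕ, P₀/2 ≤ ∏ n ∈ Finset.range k, (1 - Real.exp (-β n)) := by
    intro k
    by_cases hk : k ≤ n₀
    · have heq := Finset.prod_range_mul_prod_Ico (fun n => 1 - Real.exp (-β n)) hk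
      have h1 : (∏ n ∈ Finset.Ico k n₀, (1 - Real.exp (-β n))) ≤ 1 :=
        Finset.prod_le_one (fun n _ => (hfac_pos n).le) (fun n _ => hfac_le1 n)
      have h2 : 0 ≤ ∏ n ∈ Finset.range k, (1 - Real.exp (-β n)) :=
        Finset.prod_nonneg fun n _ => (hfac_pos n).le
      have h3 : P₀ ≤ ∏ n ∈ Finset.range k, (1 - Real.exp (-β n)) := by
        rw [hP₀def, ← heq]
        nlinarith
      linarith [hP₀_pos]
    · push_neg at hk
      have heq := Finset.prod_range_mul_prod_Ico (fun n => 1 - Real.exp (-β n)) hk.le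
      have h1 := hW k hk.le
      have h2 := hSsum k
      have h3 : (1:ℝ)/2 ≤ ∏ n ∈ Finset.Ico n₀ k, (1 - Real.exp (-β n)) := by linarith
      calc P₀/2 = P₀ * (1/2) := by ring
        _ ≤ P₀ * ∏ n ∈ Finset.Ico n₀ k, (1 - Real.exp (-β n)) :=
            mul_le_mul_of_nonneg_left h3 hP₀_pos.le
        _ = ∏ n ∈ Finset.range k, (1 - Real.exp (-β n)) := by
            rw [hP₀def]
            exact heq
  have hGlim : Filter.Tendsto (fun k => ∫ x in Set.Ioc (0:ℝ) (tn k), ν x)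
      Filter.atTop (nhds 1) := by
    have hmeasS : ∀ k : ℕ, MeasurableSet (Set.Ioc (0:ℝ) (tn k)) := fun _ => measurableSet_Ioc
    have hmonoS : Monotone (fun k => Set.Ioc (0:ℝ) (tn k)) := fun p q hpq =>
      Set.Ioc_subset_Ioc le_rfl (htn_mono hpq)
    have hunion : ⋃ k, Set.Ioc (0:ℝ) (tn k) = Set.Ioi 0 := by
      ext x
      simp only [Set.mem_iUnion, Set.mem_Ioc, Set.mem_Ioi]
      constructor
      · rintro ⟨k, h1, _⟩
        exact h1
      · intro hx
        obtain ⟨k, hk⟩ := (htn_top.eventually_ge_atTop x).exists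
        exact ⟨k, hx, hk⟩
    have hIu : IntegrableOn ν (⋃ k, Set.Ioc (0:ℝ) (tn k)) volume := by
      rw [hunion]; exact hν_int
    have := MeasureTheory.tendsto_setIntegral_of_monotone hmeasS hmonoS hIu
    rw [hunion, hν1] at this
    exact this
  have hQ : η₀ ≤ ∫ x in Set.Ioc (0:ℝ) i₁, ν x := by
    obtain ⟨k, hk⟩ := (hGlim.eventually (lt_mem_nhds (by norm_num : (1/2:ℝ) < 1))).exists
    have h1 := la2 k
    have h2 := prodlb k
    rw [htn0] at h1
    have h4 : P₀/2 * (1/2) ≤ (∏ n ∈ Finset.range k, (1 - Real.exp (-β n))) *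
        (∫ x in Set.Ioc (0:ℝ) (tn k), ν x) :=
      mul_le_mul h2 hk.le (by norm_num) (le_trans (by positivity) h2)
    calc η₀ = P₀/2 * (1/2) := by rw [hη₀def]; ring
      _ ≤ _ := h4.trans h1
  have hQ_nonneg : 0 ≤ ∫ x in Set.Ioc (0:ℝ) i₁, ν x :=
    le_trans hη₀_pos.le hQ
  constructor
  · intro y hy
    have h1 := point y hy.1 hy.2
    have hfy1 : i₁ ≤ finv y := by
      have := hfinv_mono.monotone hy.1; rwa [hfinv_left i₁] at this
    have hfy2 : finv y ≤ r := by
      have := hfinv_mono.monotone hy.2; rw [hfinv_left i₂] at this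
      exact this.trans hr.le
    have hεlam : ε ≤ lam (finv y) := hlam_eps (finv y) ⟨hfy1, hfy2⟩
    calc ε * (mstar * Real.exp (-L) * η₀)
        ≤ ε * (mstar * Real.exp (-L) * (∫ x in Set.Ioc (0:ℝ) i₁, ν x)) := by
          apply mul_le_mul_of_nonneg_left _ hε.le
          apply mul_le_mul_of_nonneg_left hQ (by positivity)
      _ ≤ lam (finv y) * (mstar * Real.exp (-L) * (∫ x in Set.Ioc (0:ℝ) i₁, ν x)) := by
          apply mul_le_mul_of_nonneg_right hεlam
          positivity
      _ = lam (finv y) * (mstar * Real.exp (-L)) * (∫ x in Set.Ioc (0:ℝ) i₁, ν x) := by ring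
      _ ≤ ν y := h1
  · intro y hy
    have hyi : y ∈ Set.Icc i₁ r := ⟨hy.1, hy.2.trans hr.le⟩
    have hlamy : 0 < lam y := lt_of_lt_of_le hε (hlam_eps y hyi)
    rw [le_div_iff₀ hlamy]
    have h1 := point (f y) (hf_mono.monotone hy.1) (hf_mono.monotone hy.2)
    rw [hfinv_left y] at h1
    calc mstar * Real.exp (-L) * η₀ * lam y
        ≤ mstar * Real.exp (-L) * (∫ x in Set.Ioc (0:ℝ) i₁, ν x) * lam y := by
          apply mul_le_mul_of_nonneg_right _ hlamy.le
          apply mul_le_mul_of_nonneg_left hQ (by positivity)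
      _ = lam y * (mstar * Real.exp (-L)) * (∫ x in Set.Ioc (0:ℝ) i₁, ν x) := by ring
      _ ≤ ν (f y) := h1
end

section
/- Let λ ∈ E(c̄,b) and let ν be an invariant probability density of the kernel with density P_λ. Then for every y ∈ f(I), ν(y) ≥ ε·e^{−L}·m(y)·∫₀^{i₁} ν(x) dx. -/
open MeasureTheory

/-- for λ ∈ E(c̄,b) and ν an invariant probability density of the kernel
with density P_λ, one has ν(y) ≥ ε·e^{−L}·m(y)·∫₀^{i₁} ν(x) dx for every y ∈ f(I). -/
theorem invariant_density_lower_bound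
    (κ : ℝ) (hκ : κ ∈ Set.Ioo (0 : ℝ) 1)
    (f finv : ℝ → ℝ)
    (hf_mono : StrictMono f) (hf_cont : Continuous f) (hf0 : f 0 = 0)
    (hf_bound : ∀ x : ℝ, 0 < x → 0 < f x ∧ f x ≤ κ * x)
    (hfinv_left : Function.LeftInverse finv f)
    (hfinv_right : Function.RightInverse finv f)
    (g : ℝ → ℝ → ℝ) (hg_meas : Measurable (Function.uncurry g))
    (m M : ℝ → ℝ) (hm_cont : Continuous m) (hM_cont : Continuous M)
    (hm_pos : ∀ y, 0 < m y) (hM_pos : ∀ y, 0 < M y)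
    (hg_bound : ∀ x y : ℝ, 0 ≤ x → 0 < y → m y ≤ g x y ∧ g x y ≤ M y)
    (i₁ i₂ : ℝ) (hi₁ : 0 < i₁) (hi₁₂ : i₁ < i₂)
    (b r L a ε : ℝ) (hb : 0 < b) (hr : i₂ < r) (hL : 0 < L) (ha : 0 < a) (hε : 0 < ε)
    (lam : ℝ → ℝ) (hlam_cont : Continuous lam) (hlam_nonneg : ∀ x, 0 ≤ lam x)
    (hlam_tail : ∀ x : ℝ, r ≤ x → a * f x ^ b / m (f x) ≤ lam x)
    (hlam_int : IntervalIntegrable (fun u => M u * lam (finv u)) volume 0 (f r))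
    (hlam_L : (∫ u in (0 : ℝ)..(f r), M u * lam (finv u)) ≤ L)
    (hlam_ε : ∀ x ∈ Set.Icc i₁ r, ε ≤ lam x)
    (ν : ℝ → ℝ) (hν_meas : Measurable ν) (hν_nonneg : ∀ x, 0 ≤ ν x)
    (hν_total : (∫ x in Set.Ioi (0 : ℝ), ν x) = 1)
    (hν_int : ∀ y : ℝ, 0 < y →
      IntegrableOn (fun x => ν x * Pdens f finv g lam x y) (Set.Ioi (0 : ℝ)))
    (hν_inv : ∀ y : ℝ, 0 < y →
      ν y = ∫ x in Set.Ioi (0 : ℝ), ν x * Pdens f finv g lam x y) :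
    ∀ y ∈ Set.Icc (f i₁) (f i₂),
      ε * Real.exp (-L) * m y * (∫ x in (0 : ℝ)..i₁, ν x) ≤ ν y := by

  intro y hy
  obtain ⟨hy1, hy2⟩ := hy
  have hfi₁ : 0 < f i₁ := (hf_bound i₁ hi₁).1
  have hy0 : 0 < y := lt_of_lt_of_le hfi₁ hy1
  have hyfr : y ≤ f r := hy2.trans (hf_mono (hr)).le
  -- pointwise lower bound on Ioc 0 i₁
  have key : ∀ x ∈ Set.Ioc (0:ℝ) i₁,
      ε * Real.exp (-L) * m y * ν x ≤ ν x * Pdens f finv g lam x y := by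
    intro x hx
    have hx0 : 0 < x := hx.1
    have hfx : 0 < f x := (hf_bound x hx0).1
    have hfxy : f x ≤ y := le_trans (hf_mono.monotone hx.2) hy1
    have hfinvy1 : i₁ ≤ finv y := by
      have := hfinv_right y
      have : f i₁ ≤ f (finv y) := by rw [this]; exact hy1
      exact (hf_mono.le_iff_le).1 this
    have hfinvy2 : finv y ≤ r := by
      have h2 : f (finv y) ≤ f i₂ := by rw [hfinv_right y]; exact hy2
      exact le_trans ((hf_mono.le_iff_le).1 h2) hr.le
    have hlamy : ε ≤ lam (finv y) := hlam_ε _ ⟨hfinvy1, hfinvy2⟩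
    have hgy : m y ≤ g x y := (hg_bound x y hx0.le hy0).1
    -- bound the exponent
    have hA : (∫ u in (f x)..y, lam (finv u) * g x u) ≤ L := by
      by_cases hInt : IntervalIntegrable (fun u => lam (finv u) * g x u) volume (f x) y
      · have hMint : IntervalIntegrable (fun u => M u * lam (finv u)) volume (f x) y :=
          hlam_int.mono_set (by
            rw [Set.uIcc_of_le hfxy, Set.uIcc_of_le (hfx.le.trans (hfxy.trans hyfr))]
            exact Set.Icc_subset_Icc hfx.le hyfr)
        have h1 : (∫ u in (f x)..y, lam (finv u) * g x u)
            ≤ ∫ u in (f x)..y, M u * lam (finv u) := by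
          apply intervalIntegral.integral_mono_on hfxy hInt hMint
          intro u hu
          have hu0 : 0 < u := lt_of_lt_of_le hfx hu.1
          have := (hg_bound x u hx0.le hu0).2
          calc lam (finv u) * g x u ≤ lam (finv u) * M u :=
                mul_le_mul_of_nonneg_left this (hlam_nonneg _)
            _ = M u * lam (finv u) := mul_comm _ _
        have h2 : (∫ u in (f x)..y, M u * lam (finv u))
            ≤ ∫ u in (0:ℝ)..(f r), M u * lam (finv u) := by
          apply intervalIntegral.integral_mono_interval hfx.le hfxy hyfr
          · filter_upwards with v
            exact mul_nonneg (hM_pos v).le (hlam_nonneg _)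
          · exact hlam_int
        exact h1.trans (h2.trans hlam_L)
      · rw [intervalIntegral.integral_undef hInt]; exact hL.le
    have hexp : Real.exp (-L) ≤ Real.exp (-(∫ u in (f x)..y, lam (finv u) * g x u)) :=
      Real.exp_le_exp.2 (neg_le_neg hA)
    have hP : ε * Real.exp (-L) * m y ≤ Pdens f finv g lam x y := by
      rw [Pdens, if_pos hfxy]
      calc ε * Real.exp (-L) * m y = ε * m y * Real.exp (-L) := by ring
        _ ≤ lam (finv y) * g x y * Real.exp (-(∫ u in (f x)..y, lam (finv u) * g x u)) := by
            apply mul_le_mul _ hexp (Real.exp_pos _).le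
              (mul_nonneg ((hε.le.trans hlamy)) ((hm_pos y).le.trans hgy))
            exact mul_le_mul hlamy hgy (hm_pos y).le (hε.le.trans hlamy)
    calc ε * Real.exp (-L) * m y * ν x = ν x * (ε * Real.exp (-L) * m y) := by ring
      _ ≤ ν x * Pdens f finv g lam x y :=
          mul_le_mul_of_nonneg_left hP (hν_nonneg x)
  -- nonnegativity of the integrand
  have hPnonneg : ∀ x : ℝ, x ∈ Set.Ioi (0:ℝ) → 0 ≤ ν x * Pdens f finv g lam x y := by
    intro x hx
    apply mul_nonneg (hν_nonneg x)
    rw [Pdens]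
    split
    · exact mul_nonneg (mul_nonneg (hlam_nonneg _)
        ((hm_pos y).le.trans (hg_bound x y (le_of_lt hx) hy0).1)) (Real.exp_pos _).le
    · exact le_refl 0
  by_cases hνint : IntegrableOn ν (Set.Ioc (0:ℝ) i₁)
  · have hconst : IntegrableOn (fun x => ε * Real.exp (-L) * m y * ν x)
        (Set.Ioc (0:ℝ) i₁) := hνint.const_mul _
    have hPint : IntegrableOn (fun x => ν x * Pdens f finv g lam x y)
        (Set.Ioc (0:ℝ) i₁) := (hν_int y hy0).mono_set Set.Ioc_subset_Ioi_self
    have step1 : (∫ x in Set.Ioc (0:ℝ) i₁, ε * Real.exp (-L) * m y * ν x)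
        ≤ ∫ x in Set.Ioc (0:ℝ) i₁, ν x * Pdens f finv g lam x y :=
      setIntegral_mono_on hconst hPint measurableSet_Ioc key
    have step2 : (∫ x in Set.Ioc (0:ℝ) i₁, ν x * Pdens f finv g lam x y)
        ≤ ∫ x in Set.Ioi (0:ℝ), ν x * Pdens f finv g lam x y := by
      exact setIntegral_mono_set (hν_int y hy0)
        ((ae_restrict_iff' measurableSet_Ioi).2 (Filter.Eventually.of_forall hPnonneg))
        (HasSubset.Subset.eventuallyLE Set.Ioc_subset_Ioi_self)
    have hfin : (∫ x in Set.Ioc (0:ℝ) i₁, ε * Real.exp (-L) * m y * ν x)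
        = ε * Real.exp (-L) * m y * ∫ x in (0:ℝ)..i₁, ν x := by
      rw [intervalIntegral.integral_of_le hi₁.le, ← integral_const_mul]
    rw [hν_inv y hy0]
    calc ε * Real.exp (-L) * m y * (∫ x in (0:ℝ)..i₁, ν x)
        = ∫ x in Set.Ioc (0:ℝ) i₁, ε * Real.exp (-L) * m y * ν x := hfin.symm
      _ ≤ _ := step1.trans step2
  · have : (∫ x in (0:ℝ)..i₁, ν x) = 0 := by
      apply intervalIntegral.integral_undef
      rw [intervalIntegrable_iff_integrableOn_Ioc_of_le hi₁.le]
      exact hνint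
    rw [this, mul_zero]
    rw [hν_inv y hy0]
    exact setIntegral_nonneg measurableSet_Ioi hPnonneg
end

section
/- Let p, q : ℝ × ℝ → [0,∞) be measurable transition densities, i.e. ∫_ℝ p(x,y) dy = ∫_ℝ q(x,y) dy = 1 for every x, and assume that for all x, y, p(x,y) = 0 implies q(x,y) = 0. Fix x₀ ∈ ℝ and n ≥ 1, and define on ℝⁿ the path densities P_n(x₁,…,x_n) := ∏_{i=1}^{n} p(x_{i−1},x_i) and Q_n(x₁,…,x_n) := ∏_{i=1}^{n} q(x_{i−1},x_i). Then, with the convention 0/0 = 0, the chi-square divergence satisfies χ²(Q_n, P_n) + 1 := ∫_{ℝⁿ} (Q_n²/P_n) dx₁…dx_n ≤ ( 1 + sup_{x∈ℝ} ∫_ℝ ((q(x,y) − p(x,y))²/p(x,y)) dy )ⁿ. -/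
open MeasureTheory
open scoped ENNReal

lemma markov_lintegral_bound (F : ℝ → ℝ → ℝ≥0∞) (hF : Measurable (Function.uncurry F))
    (C : ℝ≥0∞) (hC : ∀ x, (∫⁻ y, F x y) ≤ C) (x₀ : ℝ) (n : ℕ) :
    (∫⁻ z : Fin n → ℝ, ∏ i : Fin n,
        F (if h : 0 < (i : ℕ) then z ⟨(i : ℕ) - 1, lt_of_le_of_lt (Nat.sub_le _ _) i.isLt⟩ else x₀)
          (z i)) ≤ C ^ n := by
  induction n with
  | zero =>
      simp only [Finset.univ_eq_empty, Finset.prod_empty, pow_zero, lintegral_const, one_mul]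
      rw [show (volume : Measure (Fin 0 → ℝ)) = Measure.pi (fun _ => volume) from rfl]
      simp [Measure.pi_univ]
  | succ n ih =>
      set e := MeasurableEquiv.piFinSuccAbove (fun _ : Fin (n+1) => ℝ) (Fin.last n) with he
      set a : (Fin n → ℝ) → ℝ := fun w =>
        if h : 0 < n then w ⟨n - 1, Nat.sub_lt h one_pos⟩ else x₀ with ha
      set A : (Fin n → ℝ) → ℝ≥0∞ := fun w => ∏ i : Fin n,
        F (if h : 0 < (i : ℕ) then w ⟨(i : ℕ) - 1, lt_of_le_of_lt (Nat.sub_le _ _) i.isLt⟩ else x₀)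
          (w i) with hA
      have hAmeas : Measurable A := by
        apply Finset.measurable_prod
        intro i _
        have h1 : Measurable fun w : Fin n → ℝ =>
            (if h : 0 < (i : ℕ) then w ⟨(i : ℕ) - 1, lt_of_le_of_lt (Nat.sub_le _ _) i.isLt⟩
              else x₀) := by
          split
          · exact measurable_pi_apply _
          · exact measurable_const
        exact hF.comp (h1.prodMk (measurable_pi_apply i))
      have hameas : Measurable a := by
        rw [ha]; split
        · exact measurable_pi_apply _
        · exact measurable_const
      set H : ℝ × (Fin n → ℝ) → ℝ≥0∞ := fun xw => A xw.2 * F (a xw.2) xw.1 with hH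
      have hHmeas : Measurable H := by
        apply Measurable.mul (hAmeas.comp measurable_snd)
        exact hF.comp ((hameas.comp measurable_snd).prodMk measurable_fst)
      have hkey : ∀ z : Fin (n+1) → ℝ,
          (∏ i : Fin (n+1),
            F (if h : 0 < (i : ℕ) then z ⟨(i : ℕ) - 1, lt_of_le_of_lt (Nat.sub_le _ _) i.isLt⟩ else x₀)
              (z i)) = H (e z) := by
        intro z
        have hez : e z = (z (Fin.last n), fun j : Fin n => z j.castSucc) := by
          show (z (Fin.last n), fun j : Fin n => z ((Fin.last n).succAbove j)) = _
          exact Prod.ext rfl (funext fun j => by rw [Fin.succAbove_last])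
        rw [hez, hH]
        simp only
        rw [Fin.prod_univ_castSucc]
        refine congrArg₂ (· * ·) ?_ ?_
        · rw [hA]
          refine Finset.prod_congr rfl fun j _ => ?_
          simp only [Fin.coe_castSucc]
          by_cases hj : 0 < (j : ℕ)
          · rw [dif_pos hj, dif_pos hj]; rfl
          · rw [dif_neg hj, dif_neg hj]
        · rw [ha]
          simp only [Fin.val_last]
          by_cases hn : 0 < n
          · rw [dif_pos hn, dif_pos hn]; rfl
          · rw [dif_neg hn, dif_neg hn]
      calc (∫⁻ z : Fin (n+1) → ℝ, ∏ i : Fin (n+1),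
            F (if h : 0 < (i : ℕ) then z ⟨(i : ℕ) - 1, lt_of_le_of_lt (Nat.sub_le _ _) i.isLt⟩ else x₀)
              (z i))
          = ∫⁻ z : Fin (n+1) → ℝ, H (e z) := lintegral_congr hkey
        _ = ∫⁻ xw, H xw ∂((volume : Measure ℝ).prod (Measure.pi fun _ : Fin n => volume)) := by
            have := (measurePreserving_piFinSuccAbove (fun _ : Fin (n+1) => (volume : Measure ℝ))
              (Fin.last n)).lintegral_comp hHmeas
            rw [← this]
            rfl
        _ = ∫⁻ w, (∫⁻ x, H (x, w)) ∂(Measure.pi fun _ : Fin n => volume) :=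
            lintegral_prod_symm' H hHmeas
        _ ≤ ∫⁻ w, A w * C ∂(Measure.pi fun _ : Fin n => volume) := by
            apply lintegral_mono
            intro w
            rw [hH]
            simp only
            rw [lintegral_const_mul _ (hF.of_uncurry_left)]
            exact mul_le_mul_right (hC _) _
        _ = (∫⁻ w, A w ∂(Measure.pi fun _ : Fin n => volume)) * C :=
            lintegral_mul_const _ hAmeas
        _ ≤ C ^ n * C := mul_le_mul_left ih _
        _ = C ^ (n + 1) := (pow_succ C n).symm


lemma chi_step_bound
    (p q : ℝ → ℝ → ℝ)
    (hp_meas : Measurable (Function.uncurry p)) (hq_meas : Measurable (Function.uncurry q))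
    (hp_nonneg : ∀ x y, 0 ≤ p x y) (hq_nonneg : ∀ x y, 0 ≤ q x y)
    (hp_one : ∀ x, ∫⁻ y, ENNReal.ofReal (p x y) = 1)
    (hq_one : ∀ x, ∫⁻ y, ENNReal.ofReal (q x y) = 1)
    (habs : ∀ x y, p x y = 0 → q x y = 0)
    (S : ℝ) (hS : 0 ≤ S)
    (hSbound : ∀ x : ℝ, (∫⁻ y, ENNReal.ofReal ((q x y - p x y) ^ 2 / p x y))
        ≤ ENNReal.ofReal S) (x : ℝ) :
    (∫⁻ y, ENNReal.ofReal (q x y ^ 2 / p x y)) ≤ ENNReal.ofReal (1 + S) := by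
  have hpt : ∀ y, ENNReal.ofReal (q x y ^ 2 / p x y) + ENNReal.ofReal (p x y)
      = ENNReal.ofReal ((q x y - p x y) ^ 2 / p x y) + ENNReal.ofReal (2 * q x y) := by
    intro y
    rcases eq_or_lt_of_le (hp_nonneg x y) with hp0 | hp0
    · have hq0 : q x y = 0 := habs x y hp0.symm
      simp [← hp0, hq0]
    · rw [← ENNReal.ofReal_add (div_nonneg (sq_nonneg _) (hp_nonneg x y)) (hp_nonneg x y),
        ← ENNReal.ofReal_add (div_nonneg (sq_nonneg _) (hp_nonneg x y))
          (mul_nonneg (by norm_num) (hq_nonneg x y))]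
      congr 1
      field_simp
      ring
  have hmeas_qp : Measurable fun y => ENNReal.ofReal (q x y ^ 2 / p x y) := by
    apply Measurable.ennreal_ofReal
    exact ((hq_meas.of_uncurry_left).pow_const 2).div (hp_meas.of_uncurry_left)
  have hmeas_p : Measurable fun y => ENNReal.ofReal (p x y) :=
    (hp_meas.of_uncurry_left).ennreal_ofReal
  have hint : (∫⁻ y, ENNReal.ofReal (q x y ^ 2 / p x y)) + 1
      = (∫⁻ y, ENNReal.ofReal ((q x y - p x y) ^ 2 / p x y)) + 2 := by
    have h1 : (∫⁻ y, (ENNReal.ofReal (q x y ^ 2 / p x y) + ENNReal.ofReal (p x y)))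
        = (∫⁻ y, ENNReal.ofReal (q x y ^ 2 / p x y)) + (∫⁻ y, ENNReal.ofReal (p x y)) :=
      lintegral_add_left hmeas_qp _
    have h2 : (∫⁻ y, (ENNReal.ofReal ((q x y - p x y) ^ 2 / p x y) + ENNReal.ofReal (2 * q x y)))
        = (∫⁻ y, ENNReal.ofReal ((q x y - p x y) ^ 2 / p x y)) + (∫⁻ y, ENNReal.ofReal (2 * q x y)) := by
      apply lintegral_add_right
      exact (measurable_const.mul (hq_meas.of_uncurry_left)).ennreal_ofReal
    have h3 : (∫⁻ y, ENNReal.ofReal (2 * q x y)) = 2 := by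
      have : ∀ y, ENNReal.ofReal (2 * q x y) = 2 * ENNReal.ofReal (q x y) := by
        intro y
        rw [ENNReal.ofReal_mul (by norm_num)]
        norm_num
      rw [lintegral_congr this, lintegral_const_mul _ (hq_meas.of_uncurry_left).ennreal_ofReal,
        hq_one x, mul_one]
    rw [← hp_one x, ← h1, lintegral_congr hpt, h2, h3]
  have hfin : (∫⁻ y, ENNReal.ofReal (q x y ^ 2 / p x y)) + 1
      ≤ ENNReal.ofReal (1 + S) + 1 := by
    rw [hint]
    have : ENNReal.ofReal (1 + S) + 1 = ENNReal.ofReal S + 2 := by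
      rw [ENNReal.ofReal_add zero_le_one hS, ENNReal.ofReal_one]
      ring
    rw [this]
    exact add_le_add_left (hSbound x) 2
  exact (ENNReal.add_le_add_iff_right ENNReal.one_ne_top).mp hfin

/-- The n-step path density `∏_{i=1}^n p(x_{i−1}, x_i)` started at `x₀`. -/
noncomputable def pathDensity (p : ℝ → ℝ → ℝ) (x₀ : ℝ) (n : ℕ) (z : Fin n → ℝ) : ℝ :=
  ∏ i : Fin n,
    p (if h : 0 < (i : ℕ) then z ⟨(i : ℕ) - 1, lt_of_le_of_lt (Nat.sub_le _ _) i.isLt⟩ else x₀)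
      (z i)

/-- for transition densities p, q with q(x,·) ≪ p(x,·) for every x, the
chi-square divergence between the n-step path densities satisfies
χ²(Q_n,P_n) + 1 = ∫ Q_n²/P_n ≤ (1 + sup_x ∫ (q(x,y)−p(x,y))²/p(x,y) dy)ⁿ
(the supremum being encoded through an arbitrary upper bound S; convention 0/0 = 0). -/
theorem chi_square_path_bound
    (p q : ℝ → ℝ → ℝ)
    (hp_meas : Measurable (Function.uncurry p)) (hq_meas : Measurable (Function.uncurry q))
    (hp_nonneg : ∀ x y, 0 ≤ p x y) (hq_nonneg : ∀ x y, 0 ≤ q x y)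
    (hp_one : ∀ x, ∫⁻ y, ENNReal.ofReal (p x y) = 1)
    (hq_one : ∀ x, ∫⁻ y, ENNReal.ofReal (q x y) = 1)
    (habs : ∀ x y, p x y = 0 → q x y = 0)
    (x₀ : ℝ) (n : ℕ) (hn : 1 ≤ n)
    (S : ℝ) (hS : 0 ≤ S)
    (hSbound : ∀ x : ℝ, (∫⁻ y, ENNReal.ofReal ((q x y - p x y) ^ 2 / p x y))
        ≤ ENNReal.ofReal S) :
    (∫⁻ z : Fin n → ℝ, ENNReal.ofReal ((pathDensity q x₀ n z) ^ 2 / pathDensity p x₀ n z))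
      ≤ ENNReal.ofReal ((1 + S) ^ n) := by
  set F : ℝ → ℝ → ℝ≥0∞ := fun x y => ENNReal.ofReal (q x y ^ 2 / p x y) with hF
  have hFmeas : Measurable (Function.uncurry F) := by
    have : Function.uncurry F
        = fun z : ℝ × ℝ => ENNReal.ofReal ((Function.uncurry q z) ^ 2 / Function.uncurry p z) :=
      rfl
    rw [this]
    exact ((hq_meas.pow_const 2).div hp_meas).ennreal_ofReal
  have hC : ∀ x, (∫⁻ y, F x y) ≤ ENNReal.ofReal (1 + S) := fun x =>
    chi_step_bound p q hp_meas hq_meas hp_nonneg hq_nonneg hp_one hq_one habs S hS hSbound x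
  have hpt : ∀ z : Fin n → ℝ,
      ENNReal.ofReal ((pathDensity q x₀ n z) ^ 2 / pathDensity p x₀ n z)
        = ∏ i : Fin n,
            F (if h : 0 < (i : ℕ) then z ⟨(i : ℕ) - 1, lt_of_le_of_lt (Nat.sub_le _ _) i.isLt⟩
                else x₀) (z i) := by
    intro z
    rw [hF]
    rw [← ENNReal.ofReal_prod_of_nonneg (fun i _ => div_nonneg (sq_nonneg _) (hp_nonneg _ _))]
    congr 1
    rw [pathDensity, pathDensity, ← Finset.prod_pow, ← Finset.prod_div_distrib]
  rw [lintegral_congr hpt]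
  calc (∫⁻ z : Fin n → ℝ, ∏ i : Fin n,
        F (if h : 0 < (i : ℕ) then z ⟨(i : ℕ) - 1, lt_of_le_of_lt (Nat.sub_le _ _) i.isLt⟩ else x₀)
          (z i))
      ≤ ENNReal.ofReal (1 + S) ^ n := markov_lintegral_bound F hFmeas _ hC x₀ n
    _ = ENNReal.ofReal ((1 + S) ^ n) := (ENNReal.ofReal_pow (by linarith) n).symm
end

section
/- Let ν, ν̂, D, D̂, t, D₀ be real numbers with ν ≥ 0, D ≥ D₀ > 0 and t > 0. Set λ := ν/D and λ̂ := (max(ν̂,0)/D̂)·1{D̂ ≥ t}. Then |λ̂ − λ| ≤ (1/t)·|ν̂ − ν| + (ν/(t·D₀))·|D̂ − D| + λ·1{D̂ < t}. -/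
/-- If ν ≥ 0, D ≥ D₀ > 0 and t > 0, setting λ = ν/D and
λ̂ = (max(ν̂,0)/D̂)·1{D̂ ≥ t}, one has
|λ̂ − λ| ≤ (1/t)|ν̂ − ν| + (ν/(t·D₀))|D̂ − D| + λ·1{D̂ < t}. -/
theorem quotient_estimator_elementary_bound
    (ν nuHat D DHat t D₀ : ℝ) (hν : 0 ≤ ν) (hD₀ : 0 < D₀) (hDD₀ : D₀ ≤ D) (ht : 0 < t) :
    |(max nuHat 0 / DHat) * (if t ≤ DHat then (1 : ℝ) else 0) - ν / D|
      ≤ (1 / t) * |nuHat - ν| + (ν / (t * D₀)) * |DHat - D|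
        + (ν / D) * (if DHat < t then (1 : ℝ) else 0) := by
  have hDpos : 0 < D := lt_of_lt_of_le hD₀ hDD₀
  by_cases h : t ≤ DHat
  · rw [if_pos h, if_neg (not_lt.mpr h), mul_one, mul_zero, add_zero]
    have hDHat : 0 < DHat := lt_of_lt_of_le ht h
    have key : max nuHat 0 / DHat - ν / D
        = (max nuHat 0 - ν) / DHat + ν * (D - DHat) / (DHat * D) := by
      field_simp; ring
    rw [key]
    refine le_trans (abs_add_le _ _) (add_le_add ?_ ?_)
    · rw [abs_div, abs_of_pos hDHat]
      have h1 : |max nuHat 0 - ν| ≤ |nuHat - ν| := by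
        have := abs_max_sub_max_le_abs nuHat ν 0
        rwa [max_eq_left hν] at this
      rw [one_div, inv_mul_eq_div]
      gcongr
    · rw [abs_div, abs_mul, abs_of_nonneg hν, abs_of_pos (mul_pos hDHat hDpos),
        abs_sub_comm]
      rw [div_mul_eq_mul_div]
      gcongr
  · rw [if_neg h, if_pos (not_le.mp h), mul_zero, mul_one, zero_sub, abs_neg,
      abs_of_nonneg (div_nonneg hν hDpos.le)]
    have h1 : 0 ≤ (1/t) * |nuHat - ν| :=
      mul_nonneg (by positivity) (abs_nonneg _)
    have h2 : 0 ≤ (ν / (t * D₀)) * |DHat - D| :=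
      mul_nonneg (by positivity) (abs_nonneg _)
    linarith
end
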